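/- arXiv:2601.20035 — 19 statements merged into one kernel-verified Lean document; each statement's English description precedes it below -/
import Mathlib

section
/- Let I, J ≥ 1. For each agent j : Fin J let C_j = {c : Fin I → ℝ | ∀ i, a j i ≤ c i ≤ b j i} be a box with a j i ≤ b j i, and assume the boxes overlap: for all i and j, (max over j' of a j' i) ≤ b j i; write ĉ i = max over j of a j i. Let β : Fin J → ℝ with 1 ≤ β j for all j, and let m, σ : Fin J → (Fin I → ℝ) be nonnegative and satisfy (MC) ∀ i, ∑_j m j i = ∑_j σ j i, and (SQ) ∀ j, ∀ c ∈ C_j, ∑_i c i * m j i ≤ β j * ∑_i c i * σ j i. Then ∑_i ∑_j (b j i − ĉ i) * max (m j i − β j * σ j i) 0 ≤ ∑_i ∑_j ĉ i * (β j − 1) * σ j i. -/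
/-- Lemma 1 of the paper: bound on how far a constant mechanism satisfying the
status-quo (SQ) and market-clearing (MC) constraints can deviate from the status quo. -/
theorem stmt0 (I J : ℕ) (hI : 1 ≤ I) (hJ : 1 ≤ J)
    (a b : Fin J → Fin I → ℝ) (hab : ∀ j i, a j i ≤ b j i)
    (chat : Fin I → ℝ)
    (hchat : ∀ i, IsGreatest (Set.range fun j => a j i) (chat i))
    (hoverlap : ∀ i j, chat i ≤ b j i)
    (β : Fin J → ℝ) (hβ : ∀ j, 1 ≤ β j)
    (m σ : Fin J → Fin I → ℝ)
    (hm : ∀ j i, 0 ≤ m j i) (hσ : ∀ j i, 0 ≤ σ j i)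
    (hMC : ∀ i, ∑ j, m j i = ∑ j, σ j i)
    (hSQ : ∀ j, ∀ c : Fin I → ℝ, (∀ i, a j i ≤ c i ∧ c i ≤ b j i) →
      ∑ i, c i * m j i ≤ β j * ∑ i, c i * σ j i) :
    ∑ i, ∑ j, (b j i - chat i) * max (m j i - β j * σ j i) 0 ≤
      ∑ i, ∑ j, chat i * (β j - 1) * σ j i := by
  have key : ∀ j, ∑ i, (b j i - chat i) * max (m j i - β j * σ j i) 0 ≤
      β j * ∑ i, chat i * σ j i - ∑ i, chat i * m j i := by
    intro j
    set c : Fin I → ℝ := fun i => if β j * σ j i < m j i then b j i else chat i with hc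
    have hmem : ∀ i, a j i ≤ c i ∧ c i ≤ b j i := by
      intro i
      have h1 : a j i ≤ chat i := (hchat i).2 ⟨j, rfl⟩
      have h2 := hoverlap i j
      have h3 := hab j i
      constructor <;> simp only [hc] <;> split <;> linarith
    have hsq := hSQ j c hmem
    have heq : ∀ i ∈ Finset.univ, (b j i - chat i) * max (m j i - β j * σ j i) 0 =
        c i * m j i - β j * (c i * σ j i) - (chat i * m j i - β j * (chat i * σ j i)) := by
      intro i _
      simp only [hc]
      split
      · rw [max_eq_left (by linarith)]; ring
      · rw [max_eq_right (by linarith)]; ring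
    rw [Finset.sum_congr rfl heq]
    simp only [Finset.sum_sub_distrib, ← Finset.mul_sum]
    linarith
  calc ∑ i, ∑ j, (b j i - chat i) * max (m j i - β j * σ j i) 0
      = ∑ j, ∑ i, (b j i - chat i) * max (m j i - β j * σ j i) 0 := Finset.sum_comm
    _ ≤ ∑ j, (β j * ∑ i, chat i * σ j i - ∑ i, chat i * m j i) :=
        Finset.sum_le_sum fun j _ => key j
    _ = ∑ i, ∑ j, chat i * (β j - 1) * σ j i := by
        rw [← Finset.sum_comm]
        have hM : ∑ j, ∑ i, chat i * m j i = ∑ j, ∑ i, chat i * σ j i := by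
          rw [Finset.sum_comm, Finset.sum_comm (f := fun j i => chat i * σ j i)]
          refine Finset.sum_congr rfl fun i _ => ?_
          rw [← Finset.mul_sum, ← Finset.mul_sum, hMC]
        simp only [Finset.mul_sum] at *
        rw [Finset.sum_sub_distrib, hM, ← Finset.sum_sub_distrib]
        refine Finset.sum_congr rfl fun j _ => ?_
        rw [← Finset.sum_sub_distrib]
        exact Finset.sum_congr rfl fun i _ => by ring
end

section
/- Let I, J ≥ 1. For each j : Fin J let C_j = {c : Fin I → ℝ | ∀ i, a j i ≤ c i ≤ b j i} with a j i ≤ b j i, and assume the intersection of the boxes is full-dimensional: for every i, (max over j of a j i) < (min over j of b j i). Let m, σ : Fin J → (Fin I → ℝ) be nonnegative and satisfy (MC) ∀ i, ∑_j m j i = ∑_j σ j i, and (SQ) ∀ j, ∀ c ∈ C_j, ∑_i c i * m j i ≤ ∑_i c i * σ j i. Then m = σ. -/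
/-- Corollary 1 of the paper: with no slack in the status-quo constraints and
full-dimensional common support of preferences, the only constant mechanism
satisfying (SQ) and (MC) is the status quo. -/
theorem stmt1 (I J : ℕ) (hI : 1 ≤ I) (hJ : 1 ≤ J)
    (a b : Fin J → Fin I → ℝ) (hab : ∀ j i, a j i ≤ b j i)
    (hfull : ∀ i (j j' : Fin J), a j i < b j' i)
    (m σ : Fin J → Fin I → ℝ)
    (hm : ∀ j i, 0 ≤ m j i) (hσ : ∀ j i, 0 ≤ σ j i)
    (hMC : ∀ i, ∑ j, m j i = ∑ j, σ j i)
    (hSQ : ∀ j, ∀ c : Fin I → ℝ, (∀ i, a j i ≤ c i ∧ c i ≤ b j i) →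
      ∑ i, c i * m j i ≤ ∑ i, c i * σ j i) :
    m = σ := by
  have hne : (Finset.univ : Finset (Fin J)).Nonempty := ⟨⟨0, hJ⟩, Finset.mem_univ _⟩
  set A : Fin I → ℝ := fun i => Finset.univ.sup' hne (fun j => a j i) with hA
  set B : Fin I → ℝ := fun i => Finset.univ.inf' hne (fun j => b j i) with hB
  have hAB : ∀ i, A i < B i := by
    intro i
    rw [hA]
    simp only [Finset.sup'_lt_iff, Finset.lt_inf'_iff]
    intro j _
    rw [hB]
    simp only [Finset.lt_inf'_iff]
    intro j' _
    exact hfull i j j'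
  set c : Fin I → ℝ := fun i => (A i + B i) / 2 with hc
  have hac : ∀ j i, a j i < c i := by
    intro j i
    have h1 : a j i ≤ A i := Finset.le_sup' (fun j => a j i) (Finset.mem_univ j)
    have := hAB i
    rw [hc]; dsimp only; linarith
  have hcb : ∀ j i, c i < b j i := by
    intro j i
    have h1 : B i ≤ b j i := Finset.inf'_le (fun j => b j i) (Finset.mem_univ j)
    have := hAB i
    rw [hc]; dsimp only; linarith
  -- per-agent equality at c
  have heq : ∀ j, ∑ i, c i * m j i = ∑ i, c i * σ j i := by
    have hswap : ∀ x : Fin J → Fin I → ℝ,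
        ∑ j, ∑ i, c i * x j i = ∑ i, c i * ∑ j, x j i := by
      intro x
      rw [Finset.sum_comm]
      simp [Finset.mul_sum]
    have hsum : ∑ j, (∑ i, c i * σ j i - ∑ i, c i * m j i) = 0 := by
      rw [Finset.sum_sub_distrib, hswap, hswap, sub_eq_zero]
      exact Finset.sum_congr rfl fun i _ => by rw [hMC i]
    have hnn : ∀ j ∈ Finset.univ, 0 ≤ ∑ i, c i * σ j i - ∑ i, c i * m j i := by
      intro j _
      have := hSQ j c (fun i => ⟨(hac j i).le, (hcb j i).le⟩)
      linarith
    intro j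
    have := (Finset.sum_eq_zero_iff_of_nonneg hnn).mp hsum j (Finset.mem_univ j)
    linarith
  funext j i0
  set ε : ℝ := min (c i0 - a j i0) (b j i0 - c i0) with hε
  have hεpos : 0 < ε := lt_min (by linarith [hac j i0]) (by linarith [hcb j i0])
  have key : ∀ δ : ℝ, a j i0 ≤ c i0 + δ → c i0 + δ ≤ b j i0 →
      δ * m j i0 ≤ δ * σ j i0 := by
    intro δ h1 h2
    set c' : Fin I → ℝ := fun i => c i + (if i = i0 then δ else 0) with hc'
    have hbox : ∀ i, a j i ≤ c' i ∧ c' i ≤ b j i := by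
      intro i
      rw [hc']
      by_cases h : i = i0
      · subst h; simp only [if_pos rfl]; exact ⟨h1, h2⟩
      · simp only [if_neg h, add_zero]; exact ⟨(hac j i).le, (hcb j i).le⟩
    have := hSQ j c' hbox
    have expand : ∀ x : Fin J → Fin I → ℝ,
        ∑ i, c' i * x j i = (∑ i, c i * x j i) + δ * x j i0 := by
      intro x
      rw [hc']
      simp only [add_mul]
      rw [Finset.sum_add_distrib]
      congr 1
      simp [ite_mul]
    rw [expand m, expand σ, heq j] at this
    linarith
  have h1 := key ε (by linarith [min_le_left (c i0 - a j i0) (b j i0 - c i0)])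
    (by linarith [min_le_right (c i0 - a j i0) (b j i0 - c i0)])
  have h2 := key (-ε) (by linarith [min_le_left (c i0 - a j i0) (b j i0 - c i0)])
    (by linarith [min_le_right (c i0 - a j i0) (b j i0 - c i0)])
  nlinarith [h1, h2, hεpos]
end

section
/- Let I ≥ 1 and δ, c', c'' : Fin I → ℝ such that: δ i > 0 for some i; c' and c'' are nonnegative and nonzero; and convexHull ℝ {c'', 0} ∩ convexHull ℝ {δ, c', 0} = {0}. Then there exists γ : Fin I → ℝ with δ·γ < 0, c'·γ < 0, and c''·γ > 0. -/
/-! If `0 = a • δ + b • c' - c • c''` were a convex combination, then `c • c''` would lie in both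
hulls of the hypothesis, forcing `c = 0`; the positive coordinate of `δ` and the nonnegativity of `c'`
then force `a = 0`, i.e. `c' = 0`. So `0 ∉ convexHull ℝ {δ, c', -c''}`, and a hyperplane separating
`0` from this polytope gives `γ`. -/

open Set

theorem mem_convexHull_triple_iff {E : Type*} [AddCommGroup E] [Module ℝ E] {x y z p : E} :
    p ∈ convexHull ℝ {x, y, z} ↔ ∃ a b c : ℝ, 0 ≤ a ∧ 0 ≤ b ∧ 0 ≤ c ∧ a + b + c = 1 ∧
      a • x + b • y + c • z = p := by
  constructor
  · rw [convexHull_insert (insert_nonempty _ _), mem_convexJoin]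
    simp only [mem_singleton_iff, exists_eq_left, convexHull_pair]
    rintro ⟨q, ⟨b, c, hb, hc, hbc, rfl⟩, a, s, ha, hs, has, rfl⟩
    refine ⟨a, s * b, s * c, ha, mul_nonneg hs hb, mul_nonneg hs hc, ?_, ?_⟩
    · rw [add_assoc, ← mul_add, hbc, mul_one, has]
    · rw [smul_add, mul_smul, mul_smul, add_assoc]
  · rintro ⟨a, b, c, ha, hb, hc, habc, rfl⟩
    refine mem_convexHull_of_exists_fintype ![a, b, c] ![x, y, z] ?_ ?_ ?_ ?_
    · intro i; fin_cases i <;> assumption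
    · simpa [Fin.sum_univ_three] using habc
    · intro i; fin_cases i <;> simp
    · simp [Fin.sum_univ_three]

theorem exists_dotProduct_neg_of_zero_notMem_convexHull {ι : Type*} [Fintype ι] [DecidableEq ι]
    {s : Set (ι → ℝ)} (hs : s.Finite) (h0 : 0 ∉ convexHull ℝ s) :
    ∃ γ : ι → ℝ, ∀ x ∈ s, x ⬝ᵥ γ < 0 := by
  obtain ⟨f, u, hf, hu⟩ := geometric_hahn_banach_closed_point (convex_convexHull ℝ s)
    (hs.isCompact_convexHull (𝕜 := ℝ)).isClosed h0
  refine ⟨(dotProductEquiv ℝ ι).symm f.toLinearMap, fun x hx => ?_⟩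
  have hfx : f x < 0 := (hf x (subset_convexHull ℝ s hx)).trans (by simpa using hu)
  rwa [dotProduct_comm, ← dotProductEquiv_apply_apply, LinearEquiv.apply_symm_apply]

theorem zero_notMem_convexHull_neg {ι : Type*} {δ c' c'' : ι → ℝ}
    (hδ : ∃ i, 0 < δ i) (hc'_nn : ∀ i, 0 ≤ c' i) (hc'_ne : c' ≠ 0) (hc''_ne : c'' ≠ 0)
    (hhull : convexHull ℝ {c'', 0} ∩ convexHull ℝ {δ, c', 0} = {0}) :
    (0 : ι → ℝ) ∉ convexHull ℝ {δ, c', -c''} := by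
  rw [mem_convexHull_triple_iff]
  rintro ⟨a, b, c, ha, hb, hc, habc, hzero⟩
  have hcomb : c • c'' = a • δ + b • c' := by
    rw [smul_neg, ← sub_eq_add_neg, sub_eq_zero] at hzero
    exact hzero.symm
  have hc0 : c = 0 := by
    have hmem : c • c'' ∈ convexHull ℝ {c'', 0} ∩ convexHull ℝ {δ, c', 0} := by
      refine ⟨?_, ?_⟩
      · rw [convexHull_pair]
        exact ⟨c, 1 - c, hc, by linarith, by ring, by simp⟩
      · exact mem_convexHull_triple_iff.2 ⟨a, b, c, ha, hb, hc, habc, by simp [hcomb]⟩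
    rw [hhull, mem_singleton_iff, smul_eq_zero] at hmem
    exact hmem.resolve_right hc''_ne
  obtain ⟨i, hi⟩ := hδ
  have hcoord : a * δ i + b * c' i = 0 := by
    simpa [hc0] using (congrFun hcomb i).symm
  have ha0 : a = 0 := by
    have hδterm : a * δ i = 0 := by
      linarith [mul_nonneg ha hi.le, mul_nonneg hb (hc'_nn i)]
    exact (mul_eq_zero.1 hδterm).resolve_right hi.ne'
  have hb1 : b = 1 := by linarith
  apply hc'_ne
  simpa [ha0, hb1, hc0] using hcomb.symm

theorem stmt2_general (I : ℕ) (δ c' c'' : Fin I → ℝ)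
    (hδ : ∃ i, 0 < δ i)
    (hc'_nn : ∀ i, 0 ≤ c' i) (hc'_ne : c' ≠ 0)
    (hc''_ne : c'' ≠ 0)
    (hhull : convexHull ℝ ({c'', 0} : Set (Fin I → ℝ)) ∩
      convexHull ℝ ({δ, c', 0} : Set (Fin I → ℝ)) = {0}) :
    ∃ γ : Fin I → ℝ, (∑ i, δ i * γ i) < 0 ∧ (∑ i, c' i * γ i) < 0 ∧
      0 < ∑ i, c'' i * γ i := by
  obtain ⟨γ, hγ⟩ := exists_dotProduct_neg_of_zero_notMem_convexHull (toFinite {δ, c', -c''})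
    (zero_notMem_convexHull_neg hδ hc'_nn hc'_ne hc''_ne hhull)
  refine ⟨γ, hγ δ (by simp), hγ c' (by simp), ?_⟩
  have hc'' := hγ (-c'') (by simp)
  rwa [neg_dotProduct, neg_lt_zero] at hc''

/-- Separating-hyperplane core of Lemma 3 (lem:choice1) of the paper. -/
theorem stmt2 (I : ℕ) (hI : 1 ≤ I) (δ c' c'' : Fin I → ℝ)
    (hδ : ∃ i, 0 < δ i)
    (hc'_nn : ∀ i, 0 ≤ c' i) (hc'_ne : c' ≠ 0)
    (hc''_nn : ∀ i, 0 ≤ c'' i) (hc''_ne : c'' ≠ 0)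
    (hhull : convexHull ℝ ({c'', 0} : Set (Fin I → ℝ)) ∩
      convexHull ℝ ({δ, c', 0} : Set (Fin I → ℝ)) = {0}) :
    ∃ γ : Fin I → ℝ, (∑ i, δ i * γ i) < 0 ∧ (∑ i, c' i * γ i) < 0 ∧
      0 < ∑ i, c'' i * γ i :=
  stmt2_general I δ c' c'' hδ hc'_nn hc'_ne hc''_ne hhull
end

section
/- Let I ≥ 1 and let c¹, c², δ : Fin I → ℝ be pairwise linearly independent (each of the pairs {c¹, c²}, {c¹, δ}, {c², δ} is linearly independent). Then it is not the case that both: there exist α > 0 and ρ > 0 with c¹ = α • c² + ρ • δ, and there exist α' > 0 and ρ' > 0 with c² = α' • c¹ + ρ' • δ. -/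
/-- Key step in the proof of Proposition 1: two pairwise linearly independent cost
vectors cannot each lie in the open convex cone generated by δ and the other. -/
theorem stmt3 (I : ℕ) (hI : 1 ≤ I) (c1 c2 δ : Fin I → ℝ)
    (h12 : LinearIndependent ℝ ![c1, c2])
    (h1δ : LinearIndependent ℝ ![c1, δ])
    (h2δ : LinearIndependent ℝ ![c2, δ]) :
    ¬ ((∃ α ρ : ℝ, 0 < α ∧ 0 < ρ ∧ c1 = α • c2 + ρ • δ) ∧
       (∃ α' ρ' : ℝ, 0 < α' ∧ 0 < ρ' ∧ c2 = α' • c1 + ρ' • δ)) := by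
  rintro ⟨⟨α, ρ, hα, hρ, h1⟩, ⟨α', ρ', hα', hρ', h2⟩⟩
  have key : (1 - α * α') • c1 + (-(α * ρ' + ρ)) • δ = 0 := by
    rw [h2] at h1
    linear_combination (norm := module) h1
  have := (LinearIndependent.pair_iff.1 h1δ _ _ key).2
  nlinarith
end

section
/- Let I ≥ 1 and let c¹, c², δ : Fin I → ℝ be pairwise linearly independent (each of the pairs {c¹, c²}, {c¹, δ}, {c², δ} is linearly independent). Then convexHull ℝ {c¹, 0} ∩ convexHull ℝ {δ, c², 0} = {0}, or convexHull ℝ {c², 0} ∩ convexHull ℝ {δ, c¹, 0} = {0}. -/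
lemma mem_hull_pair' {n : ℕ} {p x : Fin n → ℝ}
    (hx : x ∈ convexHull ℝ ({p, 0} : Set (Fin n → ℝ))) :
    ∃ t : ℝ, 0 ≤ t ∧ t ≤ 1 ∧ x = t • p := by
  rw [convexHull_pair] at hx
  obtain ⟨a, b, ha, hb, hab, h⟩ := hx
  exact ⟨a, ha, by linarith, by simp [← h]⟩

lemma mem_hull_triple' {n : ℕ} {p q x : Fin n → ℝ}
    (hx : x ∈ convexHull ℝ ({p, q, 0} : Set (Fin n → ℝ))) :
    ∃ a b : ℝ, 0 ≤ a ∧ 0 ≤ b ∧ a + b ≤ 1 ∧ x = a • p + b • q := by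
  rw [show ({p, q, 0} : Set (Fin n → ℝ)) = insert p {q, 0} from rfl,
    convexHull_insert ⟨q, by simp⟩] at hx
  rw [mem_convexJoin] at hx
  obtain ⟨p', hp', z, hz, hxz⟩ := hx
  rw [Set.mem_singleton_iff] at hp'
  subst hp'
  rw [convexHull_pair] at hz
  obtain ⟨b, c, hb, hc, hbc, hz⟩ := hz
  obtain ⟨u, v, hu, hv, huv, hxz⟩ := hxz
  refine ⟨u, v * b, hu, mul_nonneg hv hb, by nlinarith, ?_⟩
  rw [← hxz, ← hz]
  simp [smul_add, smul_smul]

/-- Dichotomy from the proof of Proposition 1: for pairwise linearly independent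
c¹, c², δ, at least one ordering satisfies the hull-disjointness hypothesis. -/
theorem stmt4 (I : ℕ) (hI : 1 ≤ I) (c1 c2 δ : Fin I → ℝ)
    (h12 : LinearIndependent ℝ ![c1, c2])
    (h1δ : LinearIndependent ℝ ![c1, δ])
    (h2δ : LinearIndependent ℝ ![c2, δ]) :
    convexHull ℝ ({c1, 0} : Set (Fin I → ℝ)) ∩
      convexHull ℝ ({δ, c2, 0} : Set (Fin I → ℝ)) = {0} ∨
    convexHull ℝ ({c2, 0} : Set (Fin I → ℝ)) ∩
      convexHull ℝ ({δ, c1, 0} : Set (Fin I → ℝ)) = {0} := by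
  rw [LinearIndependent.pair_iff] at h12
  by_contra hcon
  push_neg at hcon
  obtain ⟨h1, h2⟩ := hcon
  -- extract nonzero points
  have hsub1 : ({0} : Set (Fin I → ℝ)) ⊆ convexHull ℝ ({c1, 0} : Set (Fin I → ℝ)) ∩
      convexHull ℝ ({δ, c2, 0} : Set (Fin I → ℝ)) := by
    rintro x rfl
    exact ⟨subset_convexHull ℝ _ (by simp), subset_convexHull ℝ _ (by simp)⟩
  have hsub2 : ({0} : Set (Fin I → ℝ)) ⊆ convexHull ℝ ({c2, 0} : Set (Fin I → ℝ)) ∩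
      convexHull ℝ ({δ, c1, 0} : Set (Fin I → ℝ)) := by
    rintro x rfl
    exact ⟨subset_convexHull ℝ _ (by simp), subset_convexHull ℝ _ (by simp)⟩
  obtain ⟨x, hx, hx0⟩ := Set.exists_of_ssubset (hsub1.ssubset_of_ne (Ne.symm h1))
  obtain ⟨y, hy, hy0⟩ := Set.exists_of_ssubset (hsub2.ssubset_of_ne (Ne.symm h2))
  simp only [Set.mem_singleton_iff] at hx0 hy0
  obtain ⟨hx1, hx2⟩ := hx
  obtain ⟨hy1, hy2⟩ := hy
  obtain ⟨t, ht0, ht1, hxt⟩ := mem_hull_pair' hx1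
  obtain ⟨a, b, ha, hb, hab, hxab⟩ := mem_hull_triple' hx2
  obtain ⟨s, hs0, hs1, hys⟩ := mem_hull_pair' hy1
  obtain ⟨a', b', ha', hb', hab', hyab⟩ := mem_hull_triple' hy2
  -- t > 0, s > 0
  have htpos : 0 < t := by
    rcases ht0.lt_or_eq with h | h
    · exact h
    · exact absurd (by simp [hxt, ← h]) hx0
  have hspos : 0 < s := by
    rcases hs0.lt_or_eq with h | h
    · exact h
    · exact absurd (by simp [hys, ← h]) hy0
  -- a > 0
  have hapos : 0 < a := by
    rcases ha.lt_or_eq with h | h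
    · exact h
    · have : t • c1 + (-b) • c2 = 0 := by
        have := hxt.symm.trans hxab
        rw [← h] at this
        simp at this
        rw [this]
        module
      exact absurd (h12 t (-b) this).1 htpos.ne'
  have hapos' : 0 < a' := by
    rcases ha'.lt_or_eq with h | h
    · exact h
    · have : s • c2 + (-b') • c1 = 0 := by
        have := hys.symm.trans hyab
        rw [← h] at this
        simp at this
        rw [this]
        module
      have h12' : ∀ u v : ℝ, u • c2 + v • c1 = 0 → u = 0 ∧ v = 0 := by
        intro u v huv
        have := h12 v u (by rw [← huv]; module)
        exact ⟨this.2, this.1⟩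
      exact absurd (h12' s (-b') this).1 hspos.ne'
  -- eliminate δ
  have key : (a' * t + a * b') • c1 + (-(a * s + a' * b)) • c2 = 0 := by
    have e1 : t • c1 = a • δ + b • c2 := hxt.symm.trans hxab
    have e2 : s • c2 = a' • δ + b' • c1 := hys.symm.trans hyab
    have : a' • (t • c1) - a • (s • c2) = a' • (b • c2) - a • (b' • c1) := by
      rw [e1, e2]; module
    rw [smul_smul, smul_smul, smul_smul, smul_smul] at this
    have := sub_eq_sub_iff_sub_eq_sub.mp this
    rw [neg_smul]
    linear_combination (norm := module) this
  have := (h12 _ _ key).1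
  nlinarith
end

section
/- Let I ≥ 2, let δ : Fin I → ℝ be nonzero, and let a, b : Fin I → ℝ with 0 ≤ a i < b i for all i; write C = {c : Fin I → ℝ | ∀ i, a i ≤ c i ≤ b i}. Then there exist γ : Fin I → ℝ and c', c'' ∈ C such that δ·γ < 0, c'·γ < 0, and c''·γ > 0. -/
lemma sum_two_aux {I : ℕ} {j i0 : Fin I} (h : j ≠ i0) (t : ℝ) (c : Fin I → ℝ) :
    ∑ i, c i * ((if i = j then (1:ℝ) else 0) + (if i = i0 then -t else 0))
      = c j - t * c i0 := by
  have key : ∀ i, c i * ((if i = j then (1:ℝ) else 0) + (if i = i0 then -t else 0))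
      = (if i = j then c i else 0) + (if i = i0 then -t * c i else 0) := by
    intro i
    rcases eq_or_ne i j with h1 | h1 <;> rcases eq_or_ne i i0 with h2 | h2
    · exact absurd (h1 ▸ h2) h
    · subst h1; simp [h, h2]
    · subst h2; simp [Ne.symm h, h1]; ring
    · simp [h1, h2]
  rw [Finset.sum_congr rfl fun i _ => key i, Finset.sum_add_distrib]
  simp [Finset.sum_ite_eq']
  ring

/-- Mathematical core of Proposition 1: existence of an improving bilateral trade
direction γ together with types c', c'' in the common support C. -/
theorem stmt6 (I : ℕ) (hI : 2 ≤ I) (δ : Fin I → ℝ) (hδ : δ ≠ 0)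
    (a b : Fin I → ℝ) (hab : ∀ i, 0 ≤ a i ∧ a i < b i) :
    ∃ (γ c' c'' : Fin I → ℝ),
      (∀ i, a i ≤ c' i ∧ c' i ≤ b i) ∧
      (∀ i, a i ≤ c'' i ∧ c'' i ≤ b i) ∧
      (∑ i, δ i * γ i) < 0 ∧ (∑ i, c' i * γ i) < 0 ∧ 0 < ∑ i, c'' i * γ i := by
  -- pick i0 with δ i0 ≠ 0
  obtain ⟨i0, hi0⟩ : ∃ i, δ i ≠ 0 := by
    by_contra h
    push_neg at h
    exact hδ (funext fun i => h i)
  -- pick j ≠ i0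
  have h0 : (0 : ℕ) < I := by omega
  have h1 : (1 : ℕ) < I := by omega
  obtain ⟨j, hji⟩ : ∃ j : Fin I, j ≠ i0 := by
    by_cases h : i0 = (⟨0, h0⟩ : Fin I)
    · exact ⟨⟨1, h1⟩, by simp [h, Fin.ext_iff]⟩
    · exact ⟨⟨0, h0⟩, fun hc => h hc.symm⟩
  have hbi0 : 0 < b i0 := lt_of_le_of_lt (hab i0).1 (hab i0).2
  have hai0 : 0 ≤ a i0 := (hab i0).1
  have hiab : a i0 < b i0 := (hab i0).2
  have haj : 0 ≤ a j := (hab j).1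
  have hjab : a j < b j := (hab j).2
  -- choose t among two candidates so that δ j - t * δ i0 ≠ 0
  set t1 : ℝ := (a j + b j) / (2 * b i0) with ht1
  set t2 : ℝ := (a j + 3 * b j) / (4 * b i0) with ht2
  have e1 : t1 * b i0 = (a j + b j) / 2 := by rw [ht1]; field_simp
  have e2 : t2 * b i0 = (a j + 3 * b j) / 4 := by rw [ht2]; field_simp
  have ht1nn : 0 ≤ t1 := by rw [ht1]; apply div_nonneg <;> linarith
  have ht2nn : 0 ≤ t2 := by rw [ht2]; apply div_nonneg <;> linarith
  have hprop : ∀ t : ℝ, t = t1 ∨ t = t2 → a j < t * b i0 ∧ t * a i0 < b j := by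
    intro t ht
    have h1' : t * a i0 ≤ t * b i0 := by
      apply mul_le_mul_of_nonneg_left (le_of_lt hiab)
      rcases ht with h | h <;> subst h <;> assumption
    rcases ht with h | h <;> subst h <;> constructor <;> nlinarith
  have ht12 : t1 ≠ t2 := by
    intro h
    have := e1
    rw [h, e2] at this
    linarith
  obtain ⟨t, htmem, htd⟩ : ∃ t : ℝ, (t = t1 ∨ t = t2) ∧ δ j - t * δ i0 ≠ 0 := by
    by_cases h : δ j - t1 * δ i0 ≠ 0
    · exact ⟨t1, Or.inl rfl, h⟩
    · refine ⟨t2, Or.inr rfl, fun hc => ?_⟩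
      push_neg at h
      apply ht12
      have : t1 * δ i0 = t2 * δ i0 := by linarith
      exact mul_right_cancel₀ hi0 this
  obtain ⟨hlt, hgt⟩ := hprop t htmem
  -- base direction
  set γ0 : Fin I → ℝ := fun i => (if i = j then (1:ℝ) else 0) + (if i = i0 then -t else 0)
    with hγ0
  -- candidate cost vectors
  set cneg : Fin I → ℝ := fun i => if i = i0 then b i0 else a i with hcneg
  set cpos : Fin I → ℝ := fun i => if i = j then b j else a i with hcpos
  have hcneg_mem : ∀ i, a i ≤ cneg i ∧ cneg i ≤ b i := by
    intro i
    rcases eq_or_ne i i0 with h | h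
    · subst h; simp [hcneg]; linarith
    · simp [hcneg, h]; exact le_of_lt (hab i).2
  have hcpos_mem : ∀ i, a i ≤ cpos i ∧ cpos i ≤ b i := by
    intro i
    rcases eq_or_ne i j with h | h
    · subst h; simp [hcpos]; linarith
    · simp [hcpos, h]; exact le_of_lt (hab i).2
  have sδ : ∑ i, δ i * γ0 i = δ j - t * δ i0 := sum_two_aux hji t δ
  have sneg : ∑ i, cneg i * γ0 i = a j - t * b i0 := by
    rw [sum_two_aux hji t cneg]
    simp [hcneg, hji]
  have spos : ∑ i, cpos i * γ0 i = b j - t * a i0 := by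
    rw [sum_two_aux hji t cpos]
    simp [hcpos, Ne.symm hji]
  have hneg : ∑ i, cneg i * γ0 i < 0 := by rw [sneg]; linarith
  have hpos : 0 < ∑ i, cpos i * γ0 i := by rw [spos]; linarith
  rcases lt_or_gt_of_ne htd with hd | hd
  · exact ⟨γ0, cneg, cpos, hcneg_mem, hcpos_mem, by rw [sδ]; linarith, hneg, hpos⟩
  · refine ⟨fun i => -γ0 i, cpos, cneg, hcpos_mem, hcneg_mem, ?_, ?_, ?_⟩
    · have h' : ∑ i, δ i * -γ0 i = -(∑ i, δ i * γ0 i) := by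
        rw [← Finset.sum_neg_distrib]; congr 1; ext i; ring
      rw [h', sδ]; linarith
    · have h' : ∑ i, cpos i * -γ0 i = -(∑ i, cpos i * γ0 i) := by
        rw [← Finset.sum_neg_distrib]; congr 1; ext i; ring
      rw [h']; linarith
    · have h' : ∑ i, cneg i * -γ0 i = -(∑ i, cneg i * γ0 i) := by
        rw [← Finset.sum_neg_distrib]; congr 1; ext i; ring
      rw [h']; linarith
end

section
/- Let I ≥ 1 and a, b : Fin I → ℝ. The following are equivalent: (1) there exist reals y ≥ 0 and z > 0 such that y * a i + z * b i ≥ 0 for every i; (2) for every c : Fin I → ℝ with 0 ≤ c i for all i, if c·a ≤ 0 then c·b ≥ 0. -/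
/-- Farkas-type equivalence used in Claim 5 of Theorem 2 and in Lemma 5. -/
theorem stmt7 (I : ℕ) (hI : 1 ≤ I) (a b : Fin I → ℝ) :
    (∃ y z : ℝ, 0 ≤ y ∧ 0 < z ∧ ∀ i, 0 ≤ y * a i + z * b i) ↔
    (∀ c : Fin I → ℝ, (∀ i, 0 ≤ c i) →
      (∑ i, c i * a i) ≤ 0 → 0 ≤ ∑ i, c i * b i) := by
  constructor
  · rintro ⟨y, z, hy, hz, h⟩ c hc hca
    have h1 : 0 ≤ ∑ i, c i * (y * a i + z * b i) :=
      Finset.sum_nonneg fun i _ => mul_nonneg (hc i) (h i)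
    have h2 : ∑ i, c i * (y * a i + z * b i)
        = y * (∑ i, c i * a i) + z * (∑ i, c i * b i) := by
      rw [Finset.mul_sum, Finset.mul_sum, ← Finset.sum_add_distrib]
      congr 1; ext i; ring
    rw [h2] at h1
    nlinarith
  · intro H
    -- if a i ≤ 0 then b i ≥ 0
    have hab : ∀ i, a i ≤ 0 → 0 ≤ b i := by
      intro i hai
      have h1 : ∀ j, 0 ≤ (if j = i then (1:ℝ) else 0) := by
        intro j; split <;> norm_num
      have h2 : (∑ j, (if j = i then (1:ℝ) else 0) * a j) ≤ 0 := by
        simp [ite_mul, hai]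
      have := H (fun j => if j = i then 1 else 0) h1 h2
      simpa [ite_mul] using this
    -- key pairwise inequality
    have key : ∀ i j, b i < 0 → a j < 0 → b i * a j ≤ a i * b j := by
      intro i j hbi haj
      by_contra hlt
      push_neg at hlt
      have hai : 0 < a i := by
        by_contra h'
        push_neg at h'
        exact absurd (hab i h') (not_le.mpr hbi)
      have hij : i ≠ j := fun h => by rw [h] at hai; linarith
      set c : Fin I → ℝ := fun k =>
        (-a j) * (if k = i then 1 else 0) + a i * (if k = j then 1 else 0) with hc
      have hcpos : ∀ k, 0 ≤ c k := by
        intro k; simp only [hc]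
        split <;> split <;> nlinarith
      have hsa : (∑ k, c k * a k) = (-a j) * a i + a i * a j := by
        simp [hc, add_mul, Finset.sum_add_distrib, mul_assoc, ite_mul,
          ← Finset.mul_sum]
      have hsb : (∑ k, c k * b k) = (-a j) * b i + a i * b j := by
        simp [hc, add_mul, Finset.sum_add_distrib, mul_assoc, ite_mul,
          ← Finset.mul_sum]
      have := H c hcpos (by rw [hsa]; ring_nf; linarith)
      rw [hsb] at this
      nlinarith
    by_cases hS : (Finset.univ.filter (fun i => b i < 0)).Nonempty
    · set S := Finset.univ.filter (fun i => b i < 0) with hSdef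
      set y := S.sup' hS (fun i => -b i / a i) with hy
      have hmemS : ∀ i ∈ S, b i < 0 := by
        intro i hi; simpa [hSdef] using hi
      have haS : ∀ i ∈ S, 0 < a i := by
        intro i hi
        by_contra h'
        push_neg at h'
        exact absurd (hab i h') (not_le.mpr (hmemS i hi))
      have hy0 : 0 ≤ y := by
        obtain ⟨i, hi⟩ := hS
        have h1 : -b i / a i ≤ y := Finset.le_sup' (fun i => -b i / a i) hi
        have : 0 < -b i / a i := div_pos (by linarith [hmemS i hi]) (haS i hi)
        linarith
      refine ⟨y, 1, hy0, one_pos, ?_⟩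
      intro i
      rcases lt_or_ge (b i) 0 with hbi | hbi
      · have hiS : i ∈ S := by simp [hSdef, hbi]
        have h1 : -b i / a i ≤ y := Finset.le_sup' (fun i => -b i / a i) hiS
        have hai := haS i hiS
        have := (div_le_iff₀ hai).mp h1
        nlinarith
      · rcases lt_or_ge (a i) 0 with hai | hai
        · have h1 : y ≤ b i / (-a i) := by
            apply Finset.sup'_le
            intro j hj
            have hbj := hmemS j hj
            have haj := haS j hj
            rw [div_le_div_iff₀ haj (by linarith : (0:ℝ) < -a i)]
            nlinarith [key j i hbj hai]
          have := (le_div_iff₀ (by linarith : (0:ℝ) < -a i)).mp h1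
          nlinarith
        · nlinarith [mul_nonneg hy0 hai]
    · refine ⟨0, 1, le_refl 0, one_pos, ?_⟩
      intro i
      have : ¬ b i < 0 := by
        intro h
        exact hS ⟨i, by simp [h]⟩
      push_neg at this
      linarith
end

section
/- Let I ≥ 1 and a, b : Fin I → ℝ. The following are equivalent: (1) there exist reals y ≥ 0 and y' ≥ 0, not both zero, such that y * a i ≥ y' * b i for every i; (2) there is no c : Fin I → ℝ with 0 ≤ c i for all i such that c·a < 0 and c·b > 0. -/
lemma two_sum_aux {I : ℕ} {i j : Fin I} (hij : i ≠ j) (l m : ℝ) (v : Fin I → ℝ) :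
    ∑ k, (if k = i then l else if k = j then m else 0) * v k = l * v i + m * v j := by
  have h : ∀ k, (if k = i then l else if k = j then m else 0) * v k
      = (if k = i then l * v i else 0) + (if k = j then m * v j else 0) := by
    intro k
    by_cases h1 : k = i <;> by_cases h2 : k = j <;> simp_all
  simp only [h, Finset.sum_add_distrib, Finset.sum_ite_eq', Finset.mem_univ, if_true]

lemma one_sum_aux {I : ℕ} (i : Fin I) (v : Fin I → ℝ) :
    ∑ k, (if k = i then (1:ℝ) else 0) * v k = v i := by
  simp [ite_mul]

/-- Farkas-type equivalence used in Claim 4 of Theorem 2. -/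
theorem stmt8 (I : ℕ) (hI : 1 ≤ I) (a b : Fin I → ℝ) :
    (∃ y y' : ℝ, 0 ≤ y ∧ 0 ≤ y' ∧ ¬(y = 0 ∧ y' = 0) ∧ ∀ i, y' * b i ≤ y * a i) ↔
    ¬ ∃ c : Fin I → ℝ, (∀ i, 0 ≤ c i) ∧
      (∑ i, c i * a i) < 0 ∧ 0 < ∑ i, c i * b i := by
  constructor
  · rintro ⟨y, y', hy, hy', hne, hall⟩ ⟨c, hc, hca, hcb⟩
    have h1 : y' * (∑ i, c i * b i) ≤ y * ∑ i, c i * a i := by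
      rw [Finset.mul_sum, Finset.mul_sum]
      refine Finset.sum_le_sum fun i _ => ?_
      have := mul_le_mul_of_nonneg_left (hall i) (hc i)
      nlinarith
    have hy'0 : y' = 0 := by nlinarith [mul_nonneg hy' hcb.le, mul_nonpos_of_nonneg_of_nonpos hy hca.le]
    have hy0 : y = 0 := by nlinarith [h1]
    exact hne ⟨hy0, hy'0⟩
  · intro hno
    by_contra h1
    push_neg at h1
    -- h1 : ∀ y y', 0 ≤ y → 0 ≤ y' → ¬(y=0 ∧ y'=0) → ∃ i, y * a i < y' * b i
    obtain ⟨i1, hi1⟩ := h1 1 0 zero_le_one le_rfl (by simp)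
    have hai1 : a i1 < 0 := by linarith [hi1]
    by_cases hcase : ∃ k, a k < 0 ∧ 0 < b k
    · obtain ⟨k, hk1, hk2⟩ := hcase
      exact hno ⟨fun m => if m = k then 1 else 0,
        fun m => by by_cases h : m = k <;> simp [h],
        by rw [one_sum_aux]; exact hk1, by rw [one_sum_aux]; exact hk2⟩
    · push_neg at hcase
      -- pick i0 minimizing b k / a k over {k | a k < 0}
      obtain ⟨i0, hi0S, hmin⟩ := Finset.exists_min_image
        (Finset.univ.filter fun k => a k < 0) (fun k => b k / a k)
        ⟨i1, by simp [hai1]⟩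
      have ha0 : a i0 < 0 := by simpa using hi0S
      have hb0 : b i0 ≤ 0 := hcase i0 ha0
      obtain ⟨j, hj⟩ := h1 (-b i0) (-a i0) (by linarith) (by linarith)
        (by intro _ h; rw [neg_eq_zero] at h; linarith)
      -- hj : -b i0 * a j < -a i0 * b j
      have hgp : a i0 * b j < a j * b i0 := by nlinarith [hj]
      have hbj : 0 < b j := by
        by_contra hbj
        push_neg at hbj
        by_cases haj : a j < 0
        · have hm := hmin j (by simp [haj])
          have hprod : (0:ℝ) < a i0 * a j := mul_pos_of_neg_of_neg ha0 haj
          have h5 := mul_le_mul_of_nonneg_right hm hprod.le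
          have e1 : b i0 / a i0 * (a i0 * a j) = b i0 * a j := by
            field_simp [ha0.ne]
          have e2 : b j / a j * (a i0 * a j) = a i0 * b j := by
            field_simp [haj.ne]
          rw [e1, e2] at h5
          nlinarith
        · push_neg at haj
          nlinarith [mul_nonneg (neg_nonneg.mpr ha0.le) (neg_nonneg.mpr hbj),
            mul_nonneg haj (neg_nonneg.mpr hb0)]
      have hi0j : i0 ≠ j := fun h => by rw [h] at hb0; linarith
      -- shortcuts
      set A : ℝ := -a i0 with hA_def
      set B : ℝ := b j with hB_def
      set P : ℝ := a j with hP_def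
      set Q : ℝ := -b i0 with hQ_def
      have hA : 0 < A := by simp [hA_def]; linarith
      have hB : 0 < B := hbj
      have hQ : 0 ≤ Q := by simp [hQ_def]; linarith
      have hPQ : P * Q < A * B := by simp only [hA_def, hP_def, hQ_def, hB_def]; nlinarith
      set lam : ℝ := if Q = 0 then max P 0 + 1 else (max P 0 + A*B/Q)/2 with hlam_def
      have key : P < lam ∧ lam * Q < A * B ∧ 0 < lam := by
        by_cases hQ0 : Q = 0
        · refine ⟨?_, ?_, ?_⟩
          · simp only [hlam_def, if_pos hQ0]
            have := le_max_left P (0:ℝ); linarith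
          · simp only [hQ0, mul_zero]; positivity
          · simp only [hlam_def, if_pos hQ0]
            have := le_max_right P (0:ℝ); linarith
        · have hQpos : 0 < Q := lt_of_le_of_ne hQ (Ne.symm hQ0)
          have hPd : P < A * B / Q := (lt_div_iff₀ hQpos).mpr hPQ
          have h0d : (0:ℝ) < A * B / Q := by positivity
          have hmd : max P 0 < A * B / Q := max_lt hPd h0d
          have hlam_eq : lam = (max P 0 + A*B/Q)/2 := by
            simp only [hlam_def, if_neg hQ0]
          refine ⟨?_, ?_, ?_⟩
          · rw [hlam_eq]; have := le_max_left P (0:ℝ); linarith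
          · have hlam_lt : lam < A * B / Q := by rw [hlam_eq]; linarith
            have h6 := mul_lt_mul_of_pos_right hlam_lt hQpos
            rwa [div_mul_cancel₀ _ hQpos.ne'] at h6
          · rw [hlam_eq]; have := le_max_right P (0:ℝ); linarith
      obtain ⟨hPlam, hlamQ, hlampos⟩ := key
      refine hno ⟨fun m => if m = i0 then lam else if m = j then A else 0, ?_, ?_, ?_⟩
      · intro m
        by_cases h1 : m = i0
        · simp [h1]; linarith
        · by_cases h2 : m = j
          · simp [h1, h2, Ne.symm hi0j]; linarith
          · simp [h1, h2]
      · rw [two_sum_aux hi0j]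
        have hai0 : a i0 = -A := by simp [hA_def]
        rw [hai0, ← hP_def]
        nlinarith
      · rw [two_sum_aux hi0j]
        have hbi0 : b i0 = -Q := by simp [hQ_def]
        rw [hbi0, ← hB_def]
        nlinarith
end

section
/- Consider a reduced trading menu on ℝ^I (endowment η : Fin I → ℝ, action type K, sets T : K → Set (Fin I → ℝ) with η ∈ T k for every k and T k₀ = {η} for some k₀) together with an OSP strategy s. Then for every k ∈ K and every x', x'' ∈ T k, there is no c : Fin I → ℝ with 0 ≤ c i for all i such that c·x' < c·η and c·x'' > c·η. -/
/-- Claims 2–3 in the proof of Theorem 2: under obvious strategy-proofness, no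
trading set can contain one point strictly better and one point strictly worse
than the endowment for some nonnegative cost vector. -/
theorem stmt9 (I : ℕ) (η : Fin I → ℝ) (K : Type*) (T : K → Set (Fin I → ℝ))
    (hη : ∀ k, η ∈ T k) (k₀ : K) (hk₀ : T k₀ = {η})
    (s : (Fin I → ℝ) → K)
    (hOSP : ∀ c : Fin I → ℝ, (∀ i, 0 < c i) → ∀ k, k ≠ s c →
      ∀ x ∈ T (s c), ∀ x' ∈ T k, (∑ i, c i * x i) ≤ ∑ i, c i * x' i)
    (k : K) (x' x'' : Fin I → ℝ) (hx' : x' ∈ T k) (hx'' : x'' ∈ T k) :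
    ¬ ∃ c : Fin I → ℝ, (∀ i, 0 ≤ c i) ∧
      (∑ i, c i * x' i) < (∑ i, c i * η i) ∧
      (∑ i, c i * η i) < ∑ i, c i * x'' i := by
  rintro ⟨c, hc, h1, h2⟩
  set A := (∑ i, x' i) - ∑ i, η i with hA
  set B := (∑ i, η i) - ∑ i, x'' i with hB
  set M := max 1 (max A B) with hM
  have hM1 : (1:ℝ) ≤ M := le_max_left _ _
  have hM0 : (0:ℝ) < M := lt_of_lt_of_le one_pos hM1
  set d1 := (∑ i, c i * η i) - ∑ i, c i * x' i with hd1
  set d2 := (∑ i, c i * x'' i) - ∑ i, c i * η i with hd2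
  have hd1p : 0 < d1 := by simp only [hd1]; linarith
  have hd2p : 0 < d2 := by simp only [hd2]; linarith
  set m := min d1 d2 with hm
  have hmp : 0 < m := lt_min hd1p hd2p
  set ε := m / (2 * M) with hεdef
  have hεp : 0 < ε := div_pos hmp (by positivity)
  have key : ε * M = m / 2 := by
    rw [hεdef]; field_simp
  have hεA : ε * A < d1 := by
    have h1 : ε * A ≤ ε * M :=
      mul_le_mul_of_nonneg_left (le_trans (le_max_left A B) (le_max_right 1 _)) hεp.le
    have h2 : m ≤ d1 := min_le_left _ _
    linarith
  have hεB : ε * B < d2 := by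
    have h1 : ε * B ≤ ε * M :=
      mul_le_mul_of_nonneg_left (le_trans (le_max_right A B) (le_max_right 1 _)) hεp.le
    have h2 : m ≤ d2 := min_le_right _ _
    linarith
  set c' := fun i => c i + ε with hc'def
  have hc' : ∀ i, 0 < c' i := fun i => add_pos_of_nonneg_of_pos (hc i) hεp
  have sum_eq : ∀ x : Fin I → ℝ,
      (∑ i, c' i * x i) = (∑ i, c i * x i) + ε * ∑ i, x i := by
    intro x
    simp [hc'def, add_mul, Finset.sum_add_distrib, Finset.mul_sum]
  have hεA' : ε * A = ε * (∑ i, x' i) - ε * ∑ i, η i := by rw [hA]; ring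
  have hεB' : ε * B = ε * (∑ i, η i) - ε * ∑ i, x'' i := by rw [hB]; ring
  have h1' : (∑ i, c' i * x' i) < ∑ i, c' i * η i := by
    rw [sum_eq, sum_eq]
    have : ∑ i, c i * x' i = (∑ i, c i * η i) - d1 := by rw [hd1]; ring
    linarith
  have h2' : (∑ i, c' i * η i) < ∑ i, c' i * x'' i := by
    rw [sum_eq, sum_eq]
    have : ∑ i, c i * x'' i = (∑ i, c i * η i) + d2 := by rw [hd2]; ring
    linarith
  by_cases hk : k = s c'
  · have hk0ne : k₀ ≠ s c' := by
      intro heq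
      have hx''0 : x'' ∈ T k₀ := by rw [heq, ← hk]; exact hx''
      rw [hk₀] at hx''0
      rw [Set.mem_singleton_iff] at hx''0
      subst hx''0
      exact lt_irrefl _ h2'
    have := hOSP c' hc' k₀ hk0ne x'' (hk ▸ hx'') η (by rw [hk₀]; rfl)
    linarith
  · have := hOSP c' hc' k hk η (hη _) x' hx'
    linarith
end

section
/- Let I ≥ 1, η : Fin I → ℝ, and T ⊆ (Fin I → ℝ) a set such that for all x', x'' ∈ T there is no c : Fin I → ℝ with 0 ≤ c i for all i, c·x' < c·η and c·x'' > c·η. Then at least one of the following holds: (a) η ≤ x for every x ∈ T; (b) x ≤ η for every x ∈ T; (c) there exists κ : Fin I → ℝ with κ i < 0 for some i and κ i > 0 for some i, such that T ⊆ {η + y • κ | y : ℝ, 0 ≤ y}. -/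
/-!
Translate so that the endowment is the origin. The hypothesis then says that for any two points
`a, b` of the set and any `c ≥ 0`, the numbers `c ⬝ᵥ a` and `c ⬝ᵥ b` never have strictly opposite
signs. Testing this only with `c` supported on two coordinates `p, q` reduces everything to the
plane: if `a p < 0 < a q`, the functional `(a q, -a p)` vanishes on `a`, and perturbing it to
either side forces `a q * b p = a p * b q`. Hence as soon as the set contains a point `a` with
coordinates of both signs, every point is a nonnegative multiple of `a`. If it contains no such
point, a point with a negative coordinate `i` and a point with a positive coordinate `j` are
separated by `c = e i + e j`.
-/

open Filter Topology

def SignConsistent {ι : Type*} [Fintype ι] (a b : ι → ℝ) : Prop :=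
  ∀ c : ι → ℝ, 0 ≤ c → 0 ≤ (c ⬝ᵥ a) * (c ⬝ᵥ b)

def PlanarSignConsistent (A B u v : ℝ) : Prop :=
  ∀ α β : ℝ, 0 ≤ α → 0 ≤ β → 0 ≤ (α * A + β * B) * (α * u + β * v)

lemma nonpos_of_forall_pos_add_mul_nonpos {w u : ℝ} (h : ∀ ε > 0, w + ε * u ≤ 0) : w ≤ 0 := by
  have hcont : Continuous fun ε : ℝ => w + ε * u := by fun_prop
  have hlim : Tendsto (fun ε : ℝ => w + ε * u) (𝓝[>] 0) (𝓝 w) :=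
    (hcont.tendsto' 0 w (by simp)).mono_left nhdsWithin_le_nhds
  exact le_of_tendsto hlim (eventually_nhdsWithin_of_forall h)

namespace PlanarSignConsistent

variable {A B u v : ℝ}

-- `(B, -A)` annihilates `(A, B)`; pushing it towards `e₁` makes the first factor negative.
lemma mul_le_mul_of_neg_of_nonneg (h : PlanarSignConsistent A B u v) (hA : A < 0)
    (hB : 0 ≤ B) : B * u ≤ A * v := by
  suffices B * u - A * v ≤ 0 by linarith
  refine nonpos_of_forall_pos_add_mul_nonpos (u := u) fun ε hε => ?_
  have hprod := h (B + ε) (-A) (by linarith) (by linarith)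
  have hfirst : (B + ε) * A + -A * B < 0 := by nlinarith
  nlinarith [nonpos_of_mul_nonneg_right hprod hfirst]

lemma neg_swap (h : PlanarSignConsistent A B u v) : PlanarSignConsistent (-B) (-A) (-v) (-u) :=
  fun α β hα hβ => by
    convert h β α hβ hα using 1
    ring

lemma mul_le_mul_of_nonpos_of_pos (h : PlanarSignConsistent A B u v) (hA : A ≤ 0)
    (hB : 0 < B) : A * v ≤ B * u := by
  have := h.neg_swap.mul_le_mul_of_neg_of_nonneg (by linarith) (by linarith)
  linarith

lemma mul_eq_mul_of_neg_of_pos (h : PlanarSignConsistent A B u v) (hA : A < 0) (hB : 0 < B) :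
    B * u = A * v :=
  le_antisymm (h.mul_le_mul_of_neg_of_nonneg hA hB.le) (h.mul_le_mul_of_nonpos_of_pos hA.le hB)

end PlanarSignConsistent

namespace SignConsistent

variable {ι : Type*} [Fintype ι] [DecidableEq ι] {a b : ι → ℝ}

lemma planar (h : SignConsistent a b) (p q : ι) :
    PlanarSignConsistent (a p) (a q) (b p) (b q) := fun α β hα hβ => by
  simpa [add_dotProduct, single_dotProduct] using
    h (Pi.single p α + Pi.single q β) (add_nonneg (Pi.single_nonneg.2 hα) (Pi.single_nonneg.2 hβ))

lemma exists_nonneg_smul_eq {i j : ι} (h : SignConsistent a b) (hi : a i < 0) (hj : 0 < a j) :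
    ∃ t : ℝ, 0 ≤ t ∧ b = t • a := by
  have hbj : 0 ≤ b j :=
    nonneg_of_mul_nonneg_right (by simpa using h.planar j j 1 0 zero_le_one le_rfl) hj
  have hprop : ∀ k, a j * b k = a k * b j := by
    intro k
    rcases lt_trichotomy (a k) 0 with hk | hk | hk
    · exact (h.planar k j).mul_eq_mul_of_neg_of_pos hk hj
    · have hle := (h.planar i k).mul_le_mul_of_neg_of_nonneg hi hk.ge
      have hge := (h.planar k j).mul_le_mul_of_nonpos_of_pos hk.le hj
      rw [hk] at hle hge ⊢
      nlinarith
    · have hik := (h.planar i k).mul_eq_mul_of_neg_of_pos hi hk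
      have hij := (h.planar i j).mul_eq_mul_of_neg_of_pos hi hj
      exact mul_left_cancel₀ hi.ne (by linear_combination (-a j) * hik + a k * hij)
  refine ⟨b j / a j, div_nonneg hbj hj.le, funext fun k => ?_⟩
  simp only [Pi.smul_apply, smul_eq_mul]
  field_simp
  linarith [hprop k]

lemma exists_pos_or_exists_neg {i j : ι} (h : SignConsistent a b) (hi : a i < 0)
    (hj : 0 < b j) : (∃ k, 0 < a k) ∨ ∃ k, b k < 0 := by
  by_contra! hsign
  have := h.planar i j 1 1 zero_le_one zero_le_one
  nlinarith [hsign.1 j, hsign.2 i]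

end SignConsistent

lemma signConsistent_sub_of_not_separated {ι : Type*} [Fintype ι] {x y η : ι → ℝ}
    (hxy : ¬ ∃ c : ι → ℝ, (∀ i, 0 ≤ c i) ∧ c ⬝ᵥ x < c ⬝ᵥ η ∧ c ⬝ᵥ η < c ⬝ᵥ y)
    (hyx : ¬ ∃ c : ι → ℝ, (∀ i, 0 ≤ c i) ∧ c ⬝ᵥ y < c ⬝ᵥ η ∧ c ⬝ᵥ η < c ⬝ᵥ x) :
    SignConsistent (x - η) (y - η) := by
  intro c hc
  rw [dotProduct_sub, dotProduct_sub]
  by_contra! hneg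
  rcases mul_neg_iff.mp hneg with ⟨hx, hy⟩ | ⟨hx, hy⟩
  · exact hyx ⟨c, hc, by linarith, by linarith⟩
  · exact hxy ⟨c, hc, by linarith, by linarith⟩

theorem nonneg_or_nonpos_or_subset_ray_of_signConsistent {ι : Type*} [Fintype ι] [DecidableEq ι]
    {S : Set (ι → ℝ)} (hS : ∀ a ∈ S, ∀ b ∈ S, SignConsistent a b) :
    (∀ a ∈ S, 0 ≤ a) ∨ (∀ a ∈ S, a ≤ 0) ∨
      ∃ κ : ι → ℝ, (∃ i, κ i < 0) ∧ (∃ i, 0 < κ i) ∧ ∀ a ∈ S, ∃ t : ℝ, 0 ≤ t ∧ a = t • κ := by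
  by_cases hnn : ∀ a ∈ S, 0 ≤ a
  · exact Or.inl hnn
  by_cases hnp : ∀ a ∈ S, a ≤ 0
  · exact Or.inr (Or.inl hnp)
  simp only [not_forall, Pi.le_def, not_le] at hnn hnp
  obtain ⟨a, ha, i, hai⟩ := hnn
  obtain ⟨b, hb, j, hbj⟩ := hnp
  have hmixed : ∃ m ∈ S, ∃ i j, m i < 0 ∧ 0 < m j := by
    rcases (hS a ha b hb).exists_pos_or_exists_neg hai hbj with ⟨k, hk⟩ | ⟨k, hk⟩
    · exact ⟨a, ha, i, k, hai, hk⟩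
    · exact ⟨b, hb, k, j, hk, hbj⟩
  obtain ⟨m, hm, i, j, hi, hj⟩ := hmixed
  exact Or.inr (Or.inr ⟨m, ⟨i, hi⟩, ⟨j, hj⟩,
    fun z hz => (hS m hm z hz).exists_nonneg_smul_eq hi hj⟩)


theorem stmt10_general (I : ℕ) (η : Fin I → ℝ) (T : Set (Fin I → ℝ))
    (hT : ∀ x' ∈ T, ∀ x'' ∈ T, ¬ ∃ c : Fin I → ℝ, (∀ i, 0 ≤ c i) ∧
      (∑ i, c i * x' i) < (∑ i, c i * η i) ∧
      (∑ i, c i * η i) < ∑ i, c i * x'' i) :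
    (∀ x ∈ T, η ≤ x) ∨ (∀ x ∈ T, x ≤ η) ∨
    (∃ κ : Fin I → ℝ, (∃ i, κ i < 0) ∧ (∃ i, 0 < κ i) ∧
      T ⊆ {x | ∃ y : ℝ, 0 ≤ y ∧ x = η + y • κ}) := by
  have hS : ∀ a ∈ (· - η) '' T, ∀ b ∈ (· - η) '' T, SignConsistent a b := by
    rintro _ ⟨x', hx', rfl⟩ _ ⟨x'', hx'', rfl⟩
    exact signConsistent_sub_of_not_separated (hT x' hx' x'' hx'') (hT x'' hx'' x' hx')
  have hmem {x} (hx : x ∈ T) : x - η ∈ (· - η) '' T := Set.mem_image_of_mem _ hx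
  rcases nonneg_or_nonpos_or_subset_ray_of_signConsistent hS with hnn | hnp | ⟨κ, hneg, hpos, hray⟩
  · exact Or.inl fun x hx => sub_nonneg.mp (hnn _ (hmem hx))
  · exact Or.inr <| Or.inl fun x hx => sub_nonpos.mp (hnp _ (hmem hx))
  · refine Or.inr <| Or.inr ⟨κ, hneg, hpos, fun x hx => ?_⟩
    obtain ⟨t, ht, hxt⟩ := hray _ (hmem hx)
    exact ⟨t, ht, sub_eq_iff_eq_add'.mp hxt⟩

/-- Claim 4 in the proof of Theorem 2: a trading set satisfying the OSP-derived
incentive condition lies entirely above the endowment, entirely below it, or on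
a non-monotone ray originating at the endowment. -/
theorem stmt10 (I : ℕ) (hI : 1 ≤ I) (η : Fin I → ℝ) (T : Set (Fin I → ℝ))
    (hT : ∀ x' ∈ T, ∀ x'' ∈ T, ¬ ∃ c : Fin I → ℝ, (∀ i, 0 ≤ c i) ∧
      (∑ i, c i * x' i) < (∑ i, c i * η i) ∧
      (∑ i, c i * η i) < ∑ i, c i * x'' i) :
    (∀ x ∈ T, η ≤ x) ∨ (∀ x ∈ T, x ≤ η) ∨
    (∃ κ : Fin I → ℝ, (∃ i, κ i < 0) ∧ (∃ i, 0 < κ i) ∧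
      T ⊆ {x | ∃ y : ℝ, 0 ≤ y ∧ x = η + y • κ}) :=
  stmt10_general I η T hT
end

section
/- Consider a reduced trading menu on ℝ^I (endowment η : Fin I → ℝ, action type K, sets T : K → Set (Fin I → ℝ) with η ∈ T k for every k and T k₀ = {η} for some k₀) together with an OSP strategy s. Let k' ≠ k'', x' ∈ T k' and x'' ∈ T k'' be such that x' i < η i for some i and x'' i < η i for some i. Then there exist reals y' ≥ 0 and y'' > 0 with y' * (x' i − η i) + y'' * (x'' i − η i) ≥ 0 for every i. -/
open Finset

private lemma lemA {I : ℕ} (a b : Fin I → ℝ)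
    (h : ∀ c : Fin I → ℝ, (∀ i, 0 < c i) →
      0 ≤ ∑ i, c i * a i ∨ 0 ≤ ∑ i, c i * b i)
    (d : Fin I → ℝ) (hd : ∀ i, 0 ≤ d i)
    (hda : ∑ i, d i * a i < 0) (hdb : ∑ i, d i * b i < 0) : False := by
  obtain ⟨M, hM⟩ : ∃ M : ℝ, M = 1 + ∑ i, (|a i| + |b i|) := ⟨_, rfl⟩
  have hM1 : (1:ℝ) ≤ M := by
    have : 0 ≤ ∑ i, (|a i| + |b i|) := Finset.sum_nonneg (fun i _ => by positivity)
    rw [hM]; linarith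
  have hMpos : 0 < M := by linarith
  obtain ⟨m0, hm0⟩ : ∃ m0 : ℝ,
      m0 = min (-∑ i, d i * a i) (-∑ i, d i * b i) := ⟨_, rfl⟩
  have hm0pos : 0 < m0 := by rw [hm0]; exact lt_min (by linarith) (by linarith)
  have hm0a : m0 ≤ -∑ i, d i * a i := by rw [hm0]; exact min_le_left _ _
  have hm0b : m0 ≤ -∑ i, d i * b i := by rw [hm0]; exact min_le_right _ _
  obtain ⟨ε, hε⟩ : ∃ ε : ℝ, ε = m0 / (2 * M) := ⟨_, rfl⟩
  have hεpos : 0 < ε := by rw [hε]; exact div_pos hm0pos (by linarith)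
  have hεM : ε * M = m0 / 2 := by
    rw [hε]; field_simp
  have habs : ∀ v : Fin I → ℝ, (∀ i, |v i| ≤ |a i| + |b i|) →
      ε * ∑ i, v i ≤ ε * M := by
    intro v hv
    apply mul_le_mul_of_nonneg_left _ hεpos.le
    calc ∑ i, v i ≤ ∑ i, (|a i| + |b i|) :=
          Finset.sum_le_sum (fun i _ => (le_abs_self _).trans (hv i))
      _ ≤ M := by linarith
  have hsa : ε * ∑ i, a i ≤ ε * M :=
    habs a (fun i => by have := abs_nonneg (b i); linarith)
  have hsb : ε * ∑ i, b i ≤ ε * M :=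
    habs b (fun i => by have := abs_nonneg (a i); linarith)
  obtain ⟨c, hc⟩ : ∃ c : Fin I → ℝ, c = fun i => d i + ε := ⟨_, rfl⟩
  have hcpos : ∀ i, 0 < c i := by
    intro i; rw [hc]; dsimp only; have := hd i; linarith
  have hsplit : ∀ v : Fin I → ℝ,
      ∑ i, c i * v i = (∑ i, d i * v i) + ε * ∑ i, v i := by
    intro v
    rw [hc]
    simp [add_mul, Finset.sum_add_distrib, Finset.mul_sum]
  have hca : ∑ i, c i * a i < 0 := by
    rw [hsplit]; linarith
  have hcb : ∑ i, c i * b i < 0 := by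
    rw [hsplit]; linarith
  rcases h c hcpos with h' | h' <;> linarith

private lemma lemA2 {I : ℕ} (a b : Fin I → ℝ)
    (h : ∀ c : Fin I → ℝ, (∀ i, 0 < c i) →
      0 ≤ ∑ i, c i * a i ∨ 0 ≤ ∑ i, c i * b i)
    (d : Fin I → ℝ) (hd : ∀ i, 0 ≤ d i) (m : Fin I) (ham : a m < 0)
    (hda : ∑ i, d i * a i ≤ 0) (hdb : ∑ i, d i * b i < 0) : False := by
  have hbm : (0:ℝ) < 1 + |b m| := by have := abs_nonneg (b m); linarith
  obtain ⟨δ, hδ⟩ : ∃ δ : ℝ, δ = (-∑ i, d i * b i) / (2 * (1 + |b m|)) := ⟨_, rfl⟩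
  have hδpos : 0 < δ := by rw [hδ]; exact div_pos (by linarith) (by linarith)
  have hδb : δ * (1 + |b m|) = (-∑ i, d i * b i) / 2 := by
    rw [hδ]; field_simp
  obtain ⟨d', hd'⟩ : ∃ d' : Fin I → ℝ,
      d' = fun i => d i + (if i = m then δ else 0) := ⟨_, rfl⟩
  have hsum : ∀ v : Fin I → ℝ,
      ∑ i, d' i * v i = (∑ i, d i * v i) + δ * v m := by
    intro v
    rw [hd']
    simp [add_mul, Finset.sum_add_distrib, ite_mul]
  apply lemA a b h d'
  · intro i
    rw [hd']; dsimp only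
    split
    · exact add_nonneg (hd i) hδpos.le
    · simpa using hd i
  · rw [hsum]
    have : δ * a m < 0 := mul_neg_of_pos_of_neg hδpos ham
    linarith
  · rw [hsum]
    have h1 : δ * b m ≤ δ * |b m| :=
      mul_le_mul_of_nonneg_left (le_abs_self _) hδpos.le
    linarith

private lemma keylem {I : ℕ} (a b : Fin I → ℝ)
    (ha : ∃ i, a i < 0) (hb : ∃ i, b i < 0)
    (h : ∀ c : Fin I → ℝ, (∀ i, 0 < c i) →
      0 ≤ ∑ i, c i * a i ∨ 0 ≤ ∑ i, c i * b i) :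
    ∃ t : ℝ, 0 ≤ t ∧ ∀ i, 0 ≤ t * a i + b i := by
  obtain ⟨j, hj⟩ := ha
  -- Step 1 : if a i ≤ 0 then b i ≥ 0
  have step1 : ∀ i, a i ≤ 0 → 0 ≤ b i := by
    intro i hai
    by_contra hbi
    push_neg at hbi
    obtain ⟨Mi, hMi⟩ : ∃ Mi : ℝ, Mi = (1 + |b j|) / (-b i) := ⟨_, rfl⟩
    have hbj0 : 0 ≤ |b j| := abs_nonneg _
    have hMipos : 0 < Mi := by
      rw [hMi]; exact div_pos (by linarith) (by linarith)
    have hMib : Mi * (-b i) = 1 + |b j| := by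
      rw [hMi]; exact div_mul_cancel₀ _ (by linarith)
    obtain ⟨d, hd⟩ : ∃ d : Fin I → ℝ,
        d = fun k => (if k = i then Mi else 0) + (if k = j then 1 else 0) := ⟨_, rfl⟩
    have hsum : ∀ v : Fin I → ℝ,
        ∑ k, d k * v k = Mi * v i + v j := by
      intro v
      rw [hd]
      simp [add_mul, Finset.sum_add_distrib, ite_mul]
    apply lemA a b h d
    · intro k
      rw [hd]; dsimp only
      apply add_nonneg <;> split <;> first | exact hMipos.le | norm_num
    · rw [hsum]
      have : Mi * a i ≤ 0 := mul_nonpos_of_nonneg_of_nonpos hMipos.le hai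
      linarith
    · rw [hsum]
      have hMib2 : Mi * b i = -(1 + |b j|) := by linear_combination -hMib
      have := le_abs_self (b j)
      linarith
  have hne : (univ : Finset (Fin I)).Nonempty := ⟨j, mem_univ j⟩
  set f : Fin I → ℝ := fun i => if 0 < a i then max (-b i / a i) 0 else 0 with hf
  have hfnn : ∀ i, 0 ≤ f i := by
    intro i
    by_cases hi : 0 < a i <;> simp [hf, hi, le_max_right]
  obtain ⟨t, ht⟩ : ∃ t : ℝ, t = univ.sup' hne f := ⟨_, rfl⟩
  have htge : ∀ i, f i ≤ t := fun i => ht ▸ le_sup' f (mem_univ i)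
  have ht0 : 0 ≤ t := le_trans (hfnn j) (htge j)
  refine ⟨t, ht0, ?_⟩
  intro m
  rcases lt_trichotomy (a m) 0 with ham | ham | ham
  · -- a m < 0
    have hbm : 0 ≤ b m := step1 m ham.le
    by_contra hcon
    push_neg at hcon
    have htpos : 0 < t := by
      rcases lt_or_eq_of_le ht0 with h' | h'
      · exact h'
      · exfalso
        rw [← h', zero_mul, zero_add] at hcon
        linarith
    obtain ⟨i, -, hi⟩ := Finset.exists_mem_eq_sup' hne f
    rw [← ht] at hi
    have hai : 0 < a i := by
      by_contra hai
      rw [hi] at htpos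
      simp [hf, hai] at htpos
    have hti : t = -b i / a i := by
      rw [hi] at htpos ⊢
      simp only [hf, if_pos hai] at htpos ⊢
      rcases le_or_gt (-b i / a i) 0 with h' | h'
      · exfalso; rw [max_eq_right h'] at htpos; exact lt_irrefl _ htpos
      · rw [max_eq_left h'.le]
    have hbi : b i = -(t * a i) := by
      have htai : t * a i = -b i := by
        rw [hti]; field_simp
      linarith
    obtain ⟨d, hd⟩ : ∃ d : Fin I → ℝ,
        d = fun k => (if k = i then -a m else 0) + (if k = m then a i else 0) := ⟨_, rfl⟩
    have hsum : ∀ v : Fin I → ℝ,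
        ∑ k, d k * v k = (-a m) * v i + a i * v m := by
      intro v
      rw [hd]
      simp [add_mul, Finset.sum_add_distrib, ite_mul]
    apply lemA2 a b h d _ m ham
    · have hz : (-a m) * a i + a i * a m = 0 := by ring
      rw [hsum, hz]
    · have key2 : (-a m) * (-(t * a i)) + a i * b m = a i * (t * a m + b m) := by ring
      rw [hsum, hbi, key2]
      exact mul_neg_of_pos_of_neg hai hcon
    · intro k
      rw [hd]; dsimp only
      apply add_nonneg <;> split <;> first | linarith | norm_num
  · -- a m = 0
    have := step1 m ham.le
    rw [ham]
    linarith
  · -- a m > 0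
    have h1 : -b m / a m ≤ f m := by simp [hf, if_pos ham, le_max_left]
    have h2 : -b m / a m ≤ t := h1.trans (htge m)
    have := (div_le_iff₀ ham).mp h2
    linarith

/-- Claim 5 in the proof of Theorem 2: any two non-remedial trading sets of an
OSP trading mechanism are polarized. -/
theorem stmt11 (I : ℕ) (η : Fin I → ℝ) (K : Type*) (T : K → Set (Fin I → ℝ))
    (hη : ∀ k, η ∈ T k) (k₀ : K) (hk₀ : T k₀ = {η})
    (s : (Fin I → ℝ) → K)
    (hOSP : ∀ c : Fin I → ℝ, (∀ i, 0 < c i) → ∀ k, k ≠ s c →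
      ∀ x ∈ T (s c), ∀ x' ∈ T k, (∑ i, c i * x i) ≤ ∑ i, c i * x' i)
    (k' k'' : K) (hkk : k' ≠ k'')
    (x' : Fin I → ℝ) (hx' : x' ∈ T k') (x'' : Fin I → ℝ) (hx'' : x'' ∈ T k'')
    (hneg' : ∃ i, x' i < η i) (hneg'' : ∃ i, x'' i < η i) :
    ∃ y' y'' : ℝ, 0 ≤ y' ∧ 0 < y'' ∧
      ∀ i, 0 ≤ y' * (x' i - η i) + y'' * (x'' i - η i) := by
  set a : Fin I → ℝ := fun i => x' i - η i with hadef
  set b : Fin I → ℝ := fun i => x'' i - η i with hbdef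
  have ha : ∃ i, a i < 0 := by
    obtain ⟨i, hi⟩ := hneg'; exact ⟨i, by simp [hadef]; linarith⟩
  have hb : ∃ i, b i < 0 := by
    obtain ⟨i, hi⟩ := hneg''; exact ⟨i, by simp [hbdef]; linarith⟩
  have h : ∀ c : Fin I → ℝ, (∀ i, 0 < c i) →
      0 ≤ ∑ i, c i * a i ∨ 0 ≤ ∑ i, c i * b i := by
    intro c hc
    by_cases hsc : k' = s c
    · right
      have hne'' : k'' ≠ s c := fun e => hkk (hsc.trans e.symm)
      have := hOSP c hc k'' hne'' η (hη (s c)) x'' hx''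
      have heq : ∑ i, c i * b i = (∑ i, c i * x'' i) - ∑ i, c i * η i := by
        simp [hbdef, mul_sub, Finset.sum_sub_distrib]
      rw [heq]; linarith
    · left
      have := hOSP c hc k' hsc η (hη (s c)) x' hx'
      have heq : ∑ i, c i * a i = (∑ i, c i * x' i) - ∑ i, c i * η i := by
        simp [hadef, mul_sub, Finset.sum_sub_distrib]
      rw [heq]; linarith
  obtain ⟨t, ht0, htall⟩ := keylem a b ha hb h
  exact ⟨t, 1, ht0, one_pos, fun i => by simpa using htall i⟩
end

section
/- Consider a reduced trading menu on ℝ^I (endowment η : Fin I → ℝ, action type K, sets T : K → Set (Fin I → ℝ) with η ∈ T k for every k and T k₀ = {η} for some k₀) together with an OSP strategy s. Suppose for some k ∈ K every x ∈ T k satisfies x ≤ η and some x ∈ T k satisfies x ≠ η. Then for every k' ∈ K, either every x ∈ T k' satisfies x ≤ η, or every x ∈ T k' satisfies η ≤ x. -/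
/-- Claim 6 in the proof of Theorem 2: if one trading set is nontrivially
remedial, every trading set is remedial or redundant. -/
theorem stmt12 (I : ℕ) (η : Fin I → ℝ) (K : Type*) (T : K → Set (Fin I → ℝ))
    (hη : ∀ k, η ∈ T k) (k₀ : K) (hk₀ : T k₀ = {η})
    (s : (Fin I → ℝ) → K)
    (hOSP : ∀ c : Fin I → ℝ, (∀ i, 0 < c i) → ∀ k, k ≠ s c →
      ∀ x ∈ T (s c), ∀ x' ∈ T k, (∑ i, c i * x i) ≤ ∑ i, c i * x' i)
    (k : K) (hrem : ∀ x ∈ T k, x ≤ η) (hne : ∃ x ∈ T k, x ≠ η) :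
    ∀ k' : K, (∀ x ∈ T k', x ≤ η) ∨ (∀ x ∈ T k', η ≤ x) := by
  obtain ⟨x₀, hx₀, hx₀ne⟩ := hne
  -- the strategy must always choose the nontrivially remedial action k
  have hsc : ∀ c : Fin I → ℝ, (∀ i, 0 < c i) → s c = k := by
    intro c hc
    by_contra hne'
    have h := hOSP c hc k (fun h => hne' h.symm) η (hη _) x₀ hx₀
    have hlt : ∑ i, c i * x₀ i < ∑ i, c i * η i := by
      apply Finset.sum_lt_sum
      · intro i _
        exact mul_le_mul_of_nonneg_left (hrem x₀ hx₀ i) (hc i).le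
      · obtain ⟨j, hj⟩ := Function.ne_iff.mp hx₀ne
        exact ⟨j, Finset.mem_univ j,
          mul_lt_mul_of_pos_left (lt_of_le_of_ne (hrem x₀ hx₀ j) hj) (hc j)⟩
    linarith
  intro k'
  by_cases hk'k : k' = k
  · left; subst hk'k; exact hrem
  · right
    intro x' hx' j
    by_contra hlt
    push_neg at hlt
    set d : Fin I → ℝ := fun i => η i - x' i with hd
    have hdj : 0 < d j := sub_pos.mpr hlt
    set S := ∑ i, |d i| with hS
    have hS0 : 0 ≤ S := Finset.sum_nonneg fun i _ => abs_nonneg _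
    obtain ⟨ε, hεpos, hεS⟩ : ∃ ε : ℝ, 0 < ε ∧ ε * S < d j := by
      refine ⟨d j / (2 * (S + 1)), by positivity, ?_⟩
      rw [div_mul_eq_mul_div, div_lt_iff₀ (by positivity)]
      nlinarith
    set c : Fin I → ℝ := fun i => if i = j then 1 else ε with hc
    have hcpos : ∀ i, 0 < c i := by
      intro i
      by_cases h : i = j <;> simp [hc, h, hεpos]
    have hosp := hOSP c hcpos k' (by rw [hsc c hcpos]; exact hk'k) η
      (by rw [hsc c hcpos]; exact hη k) x' hx'
    -- show ∑ c x' < ∑ c η, contradiction with hosp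
    have hsplit : ∑ i, c i * d i
        = c j * d j + ∑ i ∈ Finset.univ.erase j, c i * d i :=
      (Finset.add_sum_erase _ (fun i => c i * d i) (Finset.mem_univ j)).symm
    have hcj : c j = 1 := by simp [hc]
    have hbound : -(ε * S) ≤ ∑ i ∈ Finset.univ.erase j, c i * d i := by
      have h1 : ∀ i ∈ Finset.univ.erase j, -(ε * |d i|) ≤ c i * d i := by
        intro i hi
        have hij : i ≠ j := Finset.ne_of_mem_erase hi
        have : c i = ε := by simp [hc, hij]
        rw [this]
        nlinarith [neg_abs_le (d i), abs_nonneg (d i)]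
      have h2 := Finset.sum_le_sum h1
      have h3 : ∑ i ∈ Finset.univ.erase j, |d i| ≤ S := by
        rw [hS]
        exact Finset.sum_le_sum_of_subset_of_nonneg (Finset.erase_subset _ _)
          (fun i _ _ => abs_nonneg _)
      calc -(ε * S) ≤ -(ε * ∑ i ∈ Finset.univ.erase j, |d i|) := by nlinarith
        _ = ∑ i ∈ Finset.univ.erase j, -(ε * |d i|) := by
            rw [Finset.mul_sum, ← Finset.sum_neg_distrib]
        _ ≤ _ := h2
    have hpos : 0 < ∑ i, c i * d i := by
      rw [hsplit, hcj]
      nlinarith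
    have hsum : ∑ i, c i * d i = (∑ i, c i * η i) - ∑ i, c i * x' i := by
      rw [← Finset.sum_sub_distrib]
      exact Finset.sum_congr rfl fun i _ => by rw [hd]; ring
    rw [hsum] at hpos
    linarith
end

section
/- Consider a reduced trading menu on ℝ^I (endowment η : Fin I → ℝ, action type K, sets T : K → Set (Fin I → ℝ) with η ∈ T k for every k and T k₀ = {η} for some k₀) together with an OSP strategy s. Then at least one of the following holds: (a) for every k ∈ K, either every x ∈ T k satisfies x ≤ η or every x ∈ T k satisfies η ≤ x; or (b) there exists κ : K → (Fin I → ℝ) such that for every k with ¬(∀ x ∈ T k, η ≤ x): T k ⊆ {η + y • κ k | y : ℝ, 0 ≤ y}, κ k i < 0 for some i, κ k i > 0 for some i; and for all k ≠ k' with ¬(∀ x ∈ T k, η ≤ x) and ¬(∀ x ∈ T k', η ≤ x), there exist reals y ≥ 0 and y' ≥ 0, not both zero, with y * κ k i + y' * κ k' i ≥ 0 for every i. -/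
open Finset

namespace Stmt13Aux

lemma eps_le {x y : ℝ} (h : ∀ ε : ℝ, 0 < ε → x + ε * y ≤ 0) : x ≤ 0 := by
  by_contra hx
  push_neg at hx
  have hε : (0:ℝ) < x / (2 * (|y| + 1)) := by positivity
  have h1 := h _ hε
  have h2 : x / (2 * (|y| + 1)) * y ≥ -(x/2) := by
    have hy : |y| ≤ |y| + 1 := by linarith
    have : x / (2 * (|y| + 1)) * |y| ≤ x / 2 := by
      rw [div_mul_eq_mul_div, div_le_div_iff₀ (by positivity) (by norm_num)]
      nlinarith [abs_nonneg y]
    nlinarith [neg_abs_le y, abs_nonneg y,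
      mul_le_mul_of_nonneg_left (neg_abs_le y) (le_of_lt hε)]
  linarith

lemma eps_ge {x y : ℝ} (h : ∀ ε : ℝ, 0 < ε → 0 ≤ x + ε * y) : 0 ≤ x := by
  have := eps_le (x := -x) (y := -y) (fun ε hε => by have := h ε hε; linarith)
  linarith

lemma eps_lt {x y : ℝ} (hx : x < 0) :
    ∃ ε₀ : ℝ, 0 < ε₀ ∧ ∀ ε : ℝ, 0 < ε → ε ≤ ε₀ → x + ε * y < 0 := by
  have hx' : (0:ℝ) < -x := by linarith
  refine ⟨(-x) / (2 * (|y| + 1)), by positivity, fun ε hε hε' => ?_⟩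
  have h1 : ε * y ≤ ε * |y| := by
    have := le_abs_self y
    nlinarith
  have h2 : ε * |y| ≤ (-x) / (2 * (|y| + 1)) * (|y| + 1) := by
    have : ε * |y| ≤ ε * (|y| + 1) := by nlinarith
    have h3 : ε * (|y| + 1) ≤ (-x) / (2 * (|y| + 1)) * (|y| + 1) := by
      have : (0:ℝ) < |y| + 1 := by positivity
      nlinarith
    linarith
  have h4 : (-x) / (2 * (|y| + 1)) * (|y| + 1) = -x / 2 := by
    field_simp
  linarith


/-- dot with a perturbed-single vector. -/
lemma dot_single_eps {I : ℕ} (i : Fin I) (ε : ℝ) (v : Fin I → ℝ) :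
    ∑ j, (ε + if j = i then 1 else 0) * v j = ε * (∑ j, v j) + v i := by
  have : ∀ j, (ε + if j = i then 1 else 0) * v j
      = ε * v j + (if j = i then v j else 0) := by
    intro j; by_cases h : j = i <;> simp [h] <;> ring
  rw [Finset.sum_congr rfl (fun j _ => this j), Finset.sum_add_distrib,
    ← Finset.mul_sum, Finset.sum_ite_eq' Finset.univ i v]
  simp

lemma sum_two {I : ℕ} {i j : Fin I} (hij : i ≠ j) (A B : ℝ) (v : Fin I → ℝ) :
    ∑ m, (if m = i then A else if m = j then B else 0) * v m = A * v i + B * v j := by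
  have : ∀ m, (if m = i then A else if m = j then B else 0) * v m
      = (if m = i then A * v m else 0) + (if m = j then B * v m else 0) := by
    intro m
    by_cases h1 : m = i
    · subst h1; rw [if_pos rfl, if_pos rfl, if_neg hij, add_zero]
    · by_cases h2 : m = j
      · subst h2; rw [if_neg h1, if_pos rfl, if_neg h1, if_pos rfl, zero_add]
      · simp [h1, h2]
  rw [Finset.sum_congr rfl (fun m _ => this m), Finset.sum_add_distrib,
    Finset.sum_ite_eq' Finset.univ i (fun m => A * v m),
    Finset.sum_ite_eq' Finset.univ j (fun m => B * v m)]
  simp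

/-- there is a strictly positive c with c·v < 0 when v has a negative coordinate -/
lemma exists_pos_dot_neg {I : ℕ} {v : Fin I → ℝ} {i : Fin I} (hi : v i < 0) :
    ∃ c : Fin I → ℝ, (∀ m, 0 < c m) ∧ ∑ m, c m * v m < 0 := by
  obtain ⟨ε₀, hε₀, hlt⟩ := eps_lt (y := ∑ j, v j) hi
  refine ⟨fun j => ε₀ + if j = i then 1 else 0, fun m => ?_, ?_⟩
  · by_cases h : m = i <;> simp [h] <;> linarith
  · rw [dot_single_eps]
    have := hlt ε₀ hε₀ le_rfl
    linarith

/-- if c·v ≤ 0 for all strictly positive c, then v ≤ 0 -/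
lemma nonpos_of_forall_dot_nonpos {I : ℕ} {v : Fin I → ℝ}
    (h : ∀ c : Fin I → ℝ, (∀ m, 0 < c m) → ∑ m, c m * v m ≤ 0) : ∀ i, v i ≤ 0 := by
  intro i
  apply eps_le (y := ∑ j, v j)
  intro ε hε
  have := h (fun j => ε + if j = i then 1 else 0)
    (fun m => by by_cases hm : m = i <;> simp [hm] <;> linarith)
  rw [dot_single_eps] at this
  linarith

lemma nonneg_of_forall_dot_nonneg {I : ℕ} {v : Fin I → ℝ}
    (h : ∀ c : Fin I → ℝ, (∀ m, 0 < c m) → 0 ≤ ∑ m, c m * v m) : ∀ i, 0 ≤ v i := by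
  intro i
  have := nonpos_of_forall_dot_nonpos (v := fun m => -v m) (fun c hc => by
    have := h c hc
    simp only [mul_neg, Finset.sum_neg_distrib]
    linarith) i
  simpa using this

/-- dot of positive c with a nonpositive, somewhere-negative vector is negative -/
lemma dot_neg_of_nonpos {I : ℕ} {v : Fin I → ℝ} (hv : ∀ m, v m ≤ 0) {i : Fin I}
    (hi : v i < 0) {c : Fin I → ℝ} (hc : ∀ m, 0 < c m) : ∑ m, c m * v m < 0 := by
  have : ∑ m, c m * v m < ∑ m : Fin I, (0:ℝ) := by
    apply Finset.sum_lt_sum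
    · intro m _; exact mul_nonpos_of_nonneg_of_nonpos (hc m).le (hv m)
    · exact ⟨i, Finset.mem_univ i, mul_neg_of_pos_of_neg (hc i) hi⟩
  simpa using this

lemma dot_pos_of_nonneg {I : ℕ} {v : Fin I → ℝ} (hv : ∀ m, 0 ≤ v m) {i : Fin I}
    (hi : 0 < v i) {c : Fin I → ℝ} (hc : ∀ m, 0 < c m) : 0 < ∑ m, c m * v m := by
  have : ∑ m : Fin I, (0:ℝ) < ∑ m, c m * v m := by
    apply Finset.sum_lt_sum
    · intro m _; exact mul_nonneg (hc m).le (hv m)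
    · exact ⟨i, Finset.mem_univ i, mul_pos (hc i) hi⟩
  simpa using this


/-- a mixed-sign vector admits a strictly positive c with c·κ = 0 -/
lemma exists_pos_dot_zero {I : ℕ} {κ : Fin I → ℝ} {i j : Fin I}
    (hi : κ i < 0) (hj : 0 < κ j) :
    ∃ c : Fin I → ℝ, (∀ m, 0 < c m) ∧ ∑ m, c m * κ m = 0 := by
  have hij : i ≠ j := fun h => by rw [h] at hi; linarith
  set S : ℝ := ∑ m, κ m with hS
  set R : ℝ := S - κ i - κ j with hR
  set B : ℝ := (|R| + 1) / κ j with hB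
  have hBpos : 0 < B := by positivity
  have hBj : B * κ j = |R| + 1 := by rw [hB, div_mul_cancel₀]; exact ne_of_gt hj
  have hBR : 0 < B * κ j + R := by
    rw [hBj]; have := neg_abs_le R; linarith
  set A : ℝ := (B * κ j + R) / (-κ i) with hA
  have hApos : 0 < A := div_pos hBR (by linarith)
  have hAi : A * (-κ i) = B * κ j + R := by rw [hA, div_mul_cancel₀]; linarith
  refine ⟨fun m => if m = i then A else if m = j then B else 1, fun m => ?_, ?_⟩
  · beta_reduce
    by_cases h1 : m = i
    · simpa [h1] using hApos
    · by_cases h2 : m = j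
      · rw [if_neg h1, if_pos h2]; exact hBpos
      · rw [if_neg h1, if_neg h2]; norm_num
  · have key : ∀ m, (if m = i then A else if m = j then B else 1) * κ m
        = κ m + (if m = i then (A - 1) * κ m else 0) + (if m = j then (B - 1) * κ m else 0) := by
      intro m
      by_cases h1 : m = i
      · subst h1; rw [if_pos rfl, if_pos rfl, if_neg hij]; ring
      · by_cases h2 : m = j
        · subst h2; rw [if_neg h1, if_pos rfl, if_neg h1, if_pos rfl]; ring
        · simp [h1, h2]
    rw [Finset.sum_congr rfl (fun m _ => key m), Finset.sum_add_distrib,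
      Finset.sum_add_distrib, Finset.sum_ite_eq' Finset.univ i,
      Finset.sum_ite_eq' Finset.univ j]
    simp only [Finset.mem_univ, if_pos, ← hS]
    nlinarith [hAi, hBj]

/-- Gordan-type lemma for two generators. -/
lemma gordan2 {I : ℕ} (a b : Fin I → ℝ)
    (h : ∀ c : Fin I → ℝ, (∀ m, 0 ≤ c m) →
      0 ≤ ∑ m, c m * a m ∨ 0 ≤ ∑ m, c m * b m) :
    ∃ t : ℝ, 0 ≤ t ∧ t ≤ 1 ∧ ∀ i, 0 ≤ t * a i + (1 - t) * b i := by
  classical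
  have step1 : ∀ i, 0 ≤ a i ∨ 0 ≤ b i := by
    intro i
    have h' := h (fun m => if m = i then 1 else 0)
      (by intro m; beta_reduce; by_cases hm : m = i
          · rw [if_pos hm]; norm_num
          · rw [if_neg hm])
    have ea : ∑ m, (if m = i then (1:ℝ) else 0) * a m = a i := by
      simp [ite_mul, Finset.sum_ite_eq' Finset.univ i]
    have eb : ∑ m, (if m = i then (1:ℝ) else 0) * b m = b i := by
      simp [ite_mul, Finset.sum_ite_eq' Finset.univ i]
    rw [ea, eb] at h'
    exact h'
  set d : Fin I → ℝ := fun i => a i - b i with hd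
  have hdval : ∀ i, d i = a i - b i := fun i => rfl
  set l : Fin I → ℝ := fun i => if 0 < d i then max 0 (-(b i) / d i) else 0 with hl
  have hlval : ∀ i, l i = if 0 < d i then max 0 (-(b i) / d i) else 0 := fun i => rfl
  set F : Finset ℝ := insert 0 (Finset.image l Finset.univ) with hF
  have hFne : F.Nonempty := ⟨0, by simp [hF]⟩
  set t₀ : ℝ := F.max' hFne with ht₀
  have h0F : (0:ℝ) ∈ F := by simp [hF]
  have ht₀0 : 0 ≤ t₀ := Finset.le_max' F 0 h0F
  have hlF : ∀ i, l i ∈ F := fun i => by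
    rw [hF]; exact Finset.mem_insert_of_mem (Finset.mem_image_of_mem l (Finset.mem_univ i))
  have hlt₀ : ∀ i, l i ≤ t₀ := fun i => Finset.le_max' F _ (hlF i)
  have hl1 : ∀ i, l i ≤ 1 := by
    intro i
    rw [hlval]
    by_cases hdi : 0 < d i
    · rw [if_pos hdi]
      apply max_le (by norm_num)
      rcases step1 i with hai | hbi
      · rw [div_le_one hdi]
        have := hdval i; linarith
      · exact le_trans (div_nonpos_of_nonpos_of_nonneg (by linarith) hdi.le) (by norm_num)
    · rw [if_neg hdi]; norm_num
  have ht₀1 : t₀ ≤ 1 := by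
    apply Finset.max'_le
    intro x hx
    rw [hF] at hx
    rcases Finset.mem_insert.mp hx with h0 | him
    · rw [h0]; norm_num
    · obtain ⟨i, _, rfl⟩ := Finset.mem_image.mp him
      exact hl1 i
  refine ⟨t₀, ht₀0, ht₀1, fun i => ?_⟩
  have goal_iff : t₀ * a i + (1 - t₀) * b i = b i + t₀ * d i := by
    rw [hdval]; ring
  rw [goal_iff]
  rcases lt_trichotomy (d i) 0 with hdi | hdi | hdi
  · -- d i < 0
    have hbi : 0 ≤ b i := by
      rcases step1 i with hai | hbi
      · have := hdval i; linarith
      · exact hbi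
    have hu : 0 ≤ b i / (-(d i)) := div_nonneg hbi (by linarith)
    have ht₀u : t₀ ≤ b i / (-(d i)) := by
      apply Finset.max'_le
      intro x hx
      rw [hF] at hx
      rcases Finset.mem_insert.mp hx with h0 | him
      · rw [h0]; exact hu
      · obtain ⟨j, _, rfl⟩ := Finset.mem_image.mp him
        rw [hlval]
        by_cases hdj : 0 < d j
        · rw [if_pos hdj]
          apply max_le hu
          by_contra hcon
          push_neg at hcon
          have hij : i ≠ j := fun hEq => by rw [hEq] at hdi; linarith
          have hbj : b j < 0 := by
            by_contra hbj
            push_neg at hbj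
            have : (-(b j)) / d j ≤ 0 := div_nonpos_of_nonpos_of_nonneg (by linarith) hdj.le
            linarith
          have hkey : d j * b i - d i * b j < 0 := by
            rw [div_lt_div_iff₀ (by linarith) hdj] at hcon
            nlinarith
          have hc := h (fun m => if m = j then -(d i) else if m = i then d j else 0)
            (by intro m
                beta_reduce
                by_cases h1 : m = j
                · rw [if_pos h1]; linarith
                · rw [if_neg h1]
                  by_cases h2 : m = i
                  · rw [if_pos h2]; linarith
                  · rw [if_neg h2])
          rw [sum_two (fun hEq => hij hEq.symm), sum_two (fun hEq => hij hEq.symm)] at hc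
          have hdj' := hdval j
          have hdi' := hdval i
          rcases hc with hc | hc
          · nlinarith
          · nlinarith
        · rw [if_neg hdj]; exact hu
    have hmul := (le_div_iff₀ (show (0:ℝ) < -(d i) by linarith)).mp ht₀u
    nlinarith
  · have hbi : 0 ≤ b i := by
      rcases step1 i with hai | hbi
      · have := hdval i; linarith
      · exact hbi
    rw [hdi]; linarith
  · have hli : -(b i) / d i ≤ t₀ := by
      have := hlt₀ i
      rw [hlval, if_pos hdi] at this
      exact le_trans (le_max_right 0 _) this
    rw [div_le_iff₀ hdi] at hli
    linarith

end Stmt13Aux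


/-- Single-agent content of the hard direction of Theorem 2: every OSP trading
mechanism is effectively dominated by a polarized ray mechanism. -/
theorem stmt13 (I : ℕ) (η : Fin I → ℝ) (K : Type*) (T : K → Set (Fin I → ℝ))
    (hη : ∀ k, η ∈ T k) (k₀ : K) (hk₀ : T k₀ = {η})
    (s : (Fin I → ℝ) → K)
    (hOSP : ∀ c : Fin I → ℝ, (∀ i, 0 < c i) → ∀ k, k ≠ s c →
      ∀ x ∈ T (s c), ∀ x' ∈ T k, (∑ i, c i * x i) ≤ ∑ i, c i * x' i) :
    (∀ k : K, (∀ x ∈ T k, x ≤ η) ∨ (∀ x ∈ T k, η ≤ x)) ∨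
    (∃ κ : K → Fin I → ℝ,
      (∀ k : K, ¬(∀ x ∈ T k, η ≤ x) →
        T k ⊆ {x | ∃ y : ℝ, 0 ≤ y ∧ x = η + y • κ k} ∧
        (∃ i, κ k i < 0) ∧ (∃ i, 0 < κ k i)) ∧
      (∀ k k' : K, k ≠ k' → ¬(∀ x ∈ T k, η ≤ x) → ¬(∀ x ∈ T k', η ≤ x) →
        ∃ y y' : ℝ, 0 ≤ y ∧ 0 ≤ y' ∧ ¬(y = 0 ∧ y' = 0) ∧
          ∀ i, 0 ≤ y * κ k i + y' * κ k' i)) := by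
  classical
  open Stmt13Aux in
  by_cases hA : ∀ k : K, (∀ x ∈ T k, x ≤ η) ∨ (∀ x ∈ T k, η ≤ x)
  · exact Or.inl hA
  right
  push_neg at hA
  obtain ⟨ks, hks1, hks2⟩ := hA
  -- basic sum identity
  have hdiff : ∀ (c x : Fin I → ℝ),
      ∑ m, c m * (x m - η m) = (∑ m, c m * x m) - ∑ m, c m * η m := by
    intro c x
    rw [← Finset.sum_sub_distrib]
    exact Finset.sum_congr rfl (fun m _ => by ring)
  -- perturbation sum identities
  have hpertS : ∀ (c : Fin I → ℝ) (ε : ℝ) (m0 : Fin I) (v : Fin I → ℝ),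
      ∑ m, (c m + ε * (if m = m0 then 1 else 0)) * v m
        = (∑ m, c m * v m) + ε * v m0 := by
    intro c ε m0 v
    have key : ∀ m, (c m + ε * (if m = m0 then 1 else 0)) * v m
        = c m * v m + (if m = m0 then ε * v m else 0) := by
      intro m; by_cases hm : m = m0 <;> simp [hm] <;> ring
    rw [Finset.sum_congr rfl (fun m _ => key m), Finset.sum_add_distrib,
      Finset.sum_ite_eq' Finset.univ m0]
    simp
  have hpert2 : ∀ (c r : Fin I → ℝ) (t : ℝ) (v : Fin I → ℝ),
      ∑ m, (c m + t * r m) * v m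
        = (∑ m, c m * v m) + t * ∑ m, r m * v m := by
    intro c r t v
    rw [Finset.mul_sum, ← Finset.sum_add_distrib]
    exact Finset.sum_congr rfl (fun m _ => by ring)
  have hpert1 : ∀ (c : Fin I → ℝ) (ε : ℝ) (v : Fin I → ℝ),
      ∑ m, (c m + ε) * v m = (∑ m, c m * v m) + ε * ∑ m, v m := by
    intro c ε v
    rw [Finset.mul_sum, ← Finset.sum_add_distrib]
    exact Finset.sum_congr rfl (fun m _ => by ring)
  -- mechanism facts
  have hP1 : ∀ k, ∀ x ∈ T k, ∀ x' ∈ T k, ∀ c : Fin I → ℝ, (∀ m, 0 < c m) →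
      (∑ m, c m * (x m - η m)) < 0 → (∑ m, c m * (x' m - η m)) ≤ 0 := by
    intro k x hx x' hx' c hc hneg
    rw [hdiff] at hneg ⊢
    have hsc : s c = k := by
      by_contra hne
      have := hOSP c hc k (fun h => hne h.symm) η (hη (s c)) x hx
      linarith
    by_cases hk0 : k₀ = s c
    · have hxη : x = η := by
        have hx' : x ∈ T k₀ := by rw [hk0, hsc]; exact hx
        rw [hk₀] at hx'; exact hx'
      rw [hxη] at hneg; linarith
    · have := hOSP c hc k₀ hk0 x' (by rw [hsc]; exact hx') η (by rw [hk₀]; rfl)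
      linarith
  have hP2 : ∀ k k', k' ≠ k → ∀ x ∈ T k, ∀ x' ∈ T k', ∀ c : Fin I → ℝ,
      (∀ m, 0 < c m) →
      (∑ m, c m * (x m - η m)) < 0 → 0 ≤ ∑ m, c m * (x' m - η m) := by
    intro k k' hk' x hx x' hx' c hc hneg
    rw [hdiff] at hneg ⊢
    have hsc : s c = k := by
      by_contra hne
      have := hOSP c hc k (fun h => hne h.symm) η (hη (s c)) x hx
      linarith
    have := hOSP c hc k' (by rw [hsc]; exact hk') η (hη (s c)) x' hx'
    linarith
  -- ks witnesses
  obtain ⟨xm, hxmT, hxm⟩ := hks2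
  rw [Pi.le_def] at hxm; push_neg at hxm
  obtain ⟨im, him⟩ := hxm
  obtain ⟨xp, hxpT, hxp⟩ := hks1
  rw [Pi.le_def] at hxp; push_neg at hxp
  obtain ⟨jp, hjp⟩ := hxp
  -- the ray directions
  set κ : K → Fin I → ℝ :=
    fun k => if h : ∃ x, x ∈ T k ∧ ¬ η ≤ x then h.choose - η else 0 with hκ
  have main : ∀ k (hbk : ∃ x, x ∈ T k ∧ ¬ η ≤ x),
      (∀ x ∈ T k, ∃ y : ℝ, 0 ≤ y ∧ x = η + y • κ k) ∧
      (∃ i, κ k i < 0) ∧ (∃ i, 0 < κ k i) ∧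
      (∃ xk, xk ∈ T k ∧ ∀ m, κ k m = xk m - η m) := by
    intro k hbk
    have hκdef : κ k = hbk.choose - η := by rw [hκ]; exact dif_pos hbk
    have hxκT : hbk.choose ∈ T k := hbk.choose_spec.1
    have hκap : ∀ m, κ k m = hbk.choose m - η m := fun m => by rw [hκdef]; rfl
    have hκneg : ∃ i, κ k i < 0 := by
      have h2 := hbk.choose_spec.2
      rw [Pi.le_def] at h2; push_neg at h2
      obtain ⟨i, hi⟩ := h2
      exact ⟨i, by rw [hκap i]; linarith⟩
    obtain ⟨i0, hi0⟩ := hκneg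
    have hκsum : ∀ c : Fin I → ℝ,
        ∑ m, c m * κ k m = ∑ m, c m * (hbk.choose m - η m) :=
      fun c => Finset.sum_congr rfl (fun m _ => by rw [hκap m])
    -- one-sided dominance within the menu
    have hQ1 : ∀ x ∈ T k, ∀ c : Fin I → ℝ, (∀ m, 0 < c m) →
        (∑ m, c m * κ k m) < 0 → (∑ m, c m * (x m - η m)) ≤ 0 := by
      intro x hx c hc hneg
      rw [hκsum] at hneg
      exact hP1 k hbk.choose hxκT x hx c hc hneg
    have hQ1' : ∀ x ∈ T k, ∀ c : Fin I → ℝ, (∀ m, 0 < c m) →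
        (∑ m, c m * (x m - η m)) < 0 → (∑ m, c m * κ k m) ≤ 0 := by
      intro x hx c hc hneg
      rw [hκsum]
      exact hP1 k x hx hbk.choose hxκT c hc hneg
    -- every non-endowment point of the menu has a negative coordinate
    have hnopos : ∀ x ∈ T k, x ≠ η → ∃ m, x m - η m < 0 := by
      intro x hx hne
      by_contra hcon; push_neg at hcon
      obtain ⟨m1, hm1⟩ : ∃ m, 0 < x m - η m := by
        obtain ⟨m, hm⟩ := Function.ne_iff.mp hne
        exact ⟨m, lt_of_le_of_ne (hcon m) (fun h => hm (by linarith [h.symm]))⟩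
      obtain ⟨c, hc, hcneg⟩ := exists_pos_dot_neg hi0
      have h1 := hQ1 x hx c hc hcneg
      have h2 := dot_pos_of_nonneg hcon hm1 hc
      linarith
    -- every non-endowment point of the menu has a positive coordinate
    have hsomepos : ∀ x ∈ T k, x ≠ η → ∃ m, 0 < x m - η m := by
      intro x hx hne
      by_contra hcon; push_neg at hcon
      obtain ⟨m0, hm0⟩ := hnopos x hx hne
      have hall : ∀ c : Fin I → ℝ, (∀ m, 0 < c m) →
          ∑ m, c m * (x m - η m) < 0 := by
        intro c hc
        exact dot_neg_of_nonpos (fun m => by linarith [hcon m]) hm0 hc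
      by_cases hkks : k = ks
      · subst hkks
        have h1 : ∀ c : Fin I → ℝ, (∀ m, 0 < c m) →
            ∑ m, c m * (xp m - η m) ≤ 0 :=
          fun c hc => hP1 k x hx xp hxpT c hc (hall c hc)
        have := nonpos_of_forall_dot_nonpos h1 jp
        linarith
      · have h1 : ∀ c : Fin I → ℝ, (∀ m, 0 < c m) →
            0 ≤ ∑ m, c m * (xm m - η m) :=
          fun c hc => hP2 k ks (fun h => hkks h.symm) x hx xm hxmT c hc (hall c hc)
        have := nonneg_of_forall_dot_nonneg h1 im
        linarith
    have hxκne : hbk.choose ≠ η := by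
      intro h
      have := hκap i0
      rw [h] at this
      simp at this
      linarith [hi0, this]
    obtain ⟨j0, hj0⟩ : ∃ m, 0 < κ k m := by
      obtain ⟨m, hm⟩ := hsomepos hbk.choose hxκT hxκne
      exact ⟨m, by rw [hκap m]; linarith⟩
    refine ⟨?_, ⟨i0, hi0⟩, ⟨j0, hj0⟩, ⟨hbk.choose, hxκT, hκap⟩⟩
    -- the ray property
    intro x hx
    by_cases hne : x = η
    · exact ⟨0, le_rfl, by rw [hne]; funext m; simp⟩
    obtain ⟨c₀, hc₀pos, hc₀κ⟩ := exists_pos_dot_zero hi0 hj0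
    have hzero : ∀ c : Fin I → ℝ, (∀ m, 0 < c m) → (∑ m, c m * κ k m) = 0 →
        ∑ m, c m * (x m - η m) = 0 := by
      intro c hc hcκ
      have hle : ∑ m, c m * (x m - η m) ≤ 0 := by
        apply eps_le (y := x i0 - η i0)
        intro ε hε
        have hc' : ∀ m, 0 < c m + ε * (if m = i0 then 1 else 0) := by
          intro m; rcases eq_or_ne m i0 with hm | hm
          · rw [if_pos hm, mul_one]; linarith [hc m]
          · simp only [if_neg hm, mul_zero, add_zero]; exact hc m
        have hκ' : ∑ m, (c m + ε * (if m = i0 then 1 else 0)) * κ k m < 0 := by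
          rw [hpertS, hcκ]; simpa using mul_neg_of_pos_of_neg hε hi0
        have := hQ1 x hx _ hc' hκ'
        rw [hpertS] at this
        linarith
      have hge : 0 ≤ ∑ m, c m * (x m - η m) := by
        apply eps_ge (y := x j0 - η j0)
        intro ε hε
        have hc' : ∀ m, 0 < c m + ε * (if m = j0 then 1 else 0) := by
          intro m; rcases eq_or_ne m j0 with hm | hm
          · rw [if_pos hm, mul_one]; linarith [hc m]
          · simp only [if_neg hm, mul_zero, add_zero]; exact hc m
        have hκ' : 0 < ∑ m, (c m + ε * (if m = j0 then 1 else 0)) * κ k m := by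
          rw [hpertS, hcκ]; simpa using mul_pos hε hj0
        by_contra hcon; push_neg at hcon
        rw [← hpertS c ε j0] at hcon
        have := hQ1' x hx _ hc' hcon
        linarith
      linarith
    -- the coefficient
    set κκ : ℝ := ∑ m, κ k m * κ k m with hκκdef
    have hκκ : 0 < κκ := by
      apply Finset.sum_pos' (fun m _ => mul_self_nonneg (κ k m))
      exact ⟨i0, Finset.mem_univ i0, mul_pos_of_neg_of_neg hi0 hi0⟩
    set lam : ℝ := (∑ m, (x m - η m) * κ k m) / κκ with hlamdef
    set r : Fin I → ℝ := fun m => (x m - η m) - lam * κ k m with hrdef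
    have hrap : ∀ m, r m = (x m - η m) - lam * κ k m := fun m => rfl
    have hrκ : ∑ m, r m * κ k m = 0 := by
      have : ∀ m, r m * κ k m
          = (x m - η m) * κ k m - lam * (κ k m * κ k m) := by
        intro m; rw [hrap m]; ring
      rw [Finset.sum_congr rfl (fun m _ => this m), Finset.sum_sub_distrib,
        ← Finset.mul_sum, ← hκκdef, hlamdef, div_mul_cancel₀ _ (ne_of_gt hκκ)]
      ring
    -- positivity of the perturbed price
    haveI : Nonempty (Fin I) := ⟨i0⟩
    have huniv : (Finset.univ : Finset (Fin I)).Nonempty := ⟨i0, Finset.mem_univ i0⟩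
    set cmin : ℝ := Finset.univ.inf' huniv c₀ with hcmindef
    have hcmin : 0 < cmin := by
      rw [hcmindef, Finset.lt_inf'_iff]
      exact fun m _ => hc₀pos m
    set rmax : ℝ := Finset.univ.sup' huniv (fun m => |r m|) with hrmaxdef
    have hrmax : 0 ≤ rmax := le_trans (abs_nonneg (r i0))
      (Finset.le_sup' (fun m => |r m|) (Finset.mem_univ i0))
    set t : ℝ := cmin / (rmax + 1) with htdef
    have ht : 0 < t := by rw [htdef]; positivity
    have hct : ∀ m, 0 < c₀ m + t * r m := by
      intro m
      have h1 : |r m| ≤ rmax := Finset.le_sup' (fun m => |r m|) (Finset.mem_univ m)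
      have h2 : cmin ≤ c₀ m := Finset.inf'_le _ (Finset.mem_univ m)
      have h3 : t * |r m| ≤ t * rmax := by nlinarith
      have h4 : t * rmax < cmin := by
        rw [htdef, div_mul_eq_mul_div, div_lt_iff₀ (by positivity)]
        nlinarith
      have h5 : -(t * |r m|) ≤ t * r m := by
        have := neg_abs_le (r m)
        nlinarith
      linarith
    have hdotκ : ∑ m, (c₀ m + t * r m) * κ k m = 0 := by
      rw [hpert2, hc₀κ, hrκ]; ring
    have hdotw := hzero _ hct hdotκ
    have hc₀w := hzero c₀ hc₀pos hc₀κ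
    rw [hpert2, hc₀w] at hdotw
    have hrw : ∑ m, r m * (x m - η m) = 0 := by
      rcases mul_eq_zero.mp (by linarith : t * ∑ m, r m * (x m - η m) = 0) with h | h
      · exact absurd h (ne_of_gt ht)
      · exact h
    have hrr : ∑ m, r m * r m = 0 := by
      have : ∀ m, r m * r m = r m * (x m - η m) - lam * (r m * κ k m) := by
        intro m; rw [hrap m]; ring
      rw [Finset.sum_congr rfl (fun m _ => this m), Finset.sum_sub_distrib,
        ← Finset.mul_sum, hrw, hrκ]
      ring
    have hr0 : ∀ m, r m = 0 := by
      intro m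
      have := (Finset.sum_eq_zero_iff_of_nonneg
        (fun m _ => mul_self_nonneg (r m))).mp hrr m (Finset.mem_univ m)
      exact mul_self_eq_zero.mp this
    have hxη : ∀ m, x m - η m = lam * κ k m := by
      intro m; have := hr0 m; rw [hrap m] at this; linarith
    have hlam : 0 ≤ lam := by
      by_contra hl; push_neg at hl
      obtain ⟨c, hc, hcneg⟩ := exists_pos_dot_neg hi0
      have h1 := hQ1 x hx c hc hcneg
      have h2 : ∑ m, c m * (x m - η m) = lam * ∑ m, c m * κ k m := by
        rw [Finset.mul_sum]
        exact Finset.sum_congr rfl (fun m _ => by rw [hxη m]; ring)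
      nlinarith
    refine ⟨lam, hlam, funext fun m => ?_⟩
    have := hxη m
    have happ : (η + lam • κ k) m = η m + lam * κ k m := rfl
    rw [happ]; linarith
  -- assemble
  refine ⟨κ, fun k hbad => ?_, fun k k' hne hbad hbad' => ?_⟩
  · have hbk : ∃ x, x ∈ T k ∧ ¬ η ≤ x := by push_neg at hbad; exact hbad
    obtain ⟨hray, hneg, hpos, _⟩ := main k hbk
    exact ⟨fun x hx => hray x hx, hneg, hpos⟩
  · have hbk : ∃ x, x ∈ T k ∧ ¬ η ≤ x := by push_neg at hbad; exact hbad
    have hbk' : ∃ x, x ∈ T k' ∧ ¬ η ≤ x := by push_neg at hbad'; exact hbad'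
    obtain ⟨_, _, _, xk, hxkT, hxkap⟩ := main k hbk
    obtain ⟨_, _, _, xk', hxkT', hxkap'⟩ := main k' hbk'
    have hgord : ∀ c : Fin I → ℝ, (∀ m, 0 ≤ c m) →
        0 ≤ ∑ m, c m * κ k m ∨ 0 ≤ ∑ m, c m * κ k' m := by
      intro c hc
      by_contra hcon
      push_neg at hcon
      obtain ⟨ha, hb⟩ := hcon
      obtain ⟨ε₁, hε₁, hεa⟩ := eps_lt (y := ∑ m, κ k m) ha
      obtain ⟨ε₂, hε₂, hεb⟩ := eps_lt (y := ∑ m, κ k' m) hb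
      set ε : ℝ := min ε₁ ε₂ with hεdef
      have hε : 0 < ε := lt_min hε₁ hε₂
      have hcpos : ∀ m, 0 < c m + ε := fun m => by linarith [hc m]
      have hsa : ∑ m, (c m + ε) * κ k m < 0 := by
        rw [hpert1]; exact hεa ε hε (min_le_left _ _)
      have hsb : ∑ m, (c m + ε) * κ k' m < 0 := by
        rw [hpert1]; exact hεb ε hε (min_le_right _ _)
      have hsa' : ∑ m, (c m + ε) * (xk m - η m) < 0 := by
        rw [← Finset.sum_congr rfl (fun m _ => by rw [hxkap m] :
          ∀ m ∈ Finset.univ, (c m + ε) * κ k m = (c m + ε) * (xk m - η m))]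
        exact hsa
      have := hP2 k k' (fun h => hne h.symm) xk hxkT xk' hxkT' _ hcpos hsa'
      have hsb' : 0 ≤ ∑ m, (c m + ε) * κ k' m := by
        rw [Finset.sum_congr rfl (fun m _ => by rw [hxkap' m] :
          ∀ m ∈ Finset.univ, (c m + ε) * κ k' m = (c m + ε) * (xk' m - η m))]
        exact this
      linarith
    obtain ⟨t, ht0, ht1, hco⟩ := gordan2 (κ k) (κ k') hgord
    exact ⟨t, 1 - t, ht0, by linarith, fun ⟨h1, h2⟩ => by rw [h1] at h2; norm_num at h2,
      fun i => hco i⟩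
end

section
/- Let I ≥ 1, η : Fin I → ℝ, K a type, and κ : K → (Fin I → ℝ) a family of polarized ray directions: for every k, κ k i < 0 for some i; and for every k ≠ k' there exist reals y ≥ 0 and y' ≥ 0, not both zero, with y * κ k i + y' * κ k' i ≥ 0 for every i. Define T k = {η + y • κ k | y : ℝ, 0 ≤ y}. Let c : Fin I → ℝ be nonnegative (0 ≤ c i for all i) and k* ∈ K with c·(κ k*) ≤ 0. Then for every x ∈ T k*, c·x ≤ c·η, and for every k ≠ k* and every x' ∈ T k, c·η ≤ c·x'; in particular c·x ≤ c·x' for all x ∈ T k* and x' ∈ T k with k ≠ k*. -/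
/-- Single-agent content of the easy direction of Theorem 2: in a menu of
polarized rays from the endowment, a weakly beneficial ray is obviously
dominant. -/
theorem stmt14 (I : ℕ) (hI : 1 ≤ I) (η : Fin I → ℝ) (K : Type*)
    (κ : K → Fin I → ℝ)
    (hneg : ∀ k, ∃ i, κ k i < 0)
    (hpol : ∀ k k' : K, k ≠ k' → ∃ y y' : ℝ, 0 ≤ y ∧ 0 ≤ y' ∧ ¬(y = 0 ∧ y' = 0) ∧
      ∀ i, 0 ≤ y * κ k i + y' * κ k' i)
    (T : K → Set (Fin I → ℝ))
    (hT : ∀ k, T k = {x | ∃ y : ℝ, 0 ≤ y ∧ x = η + y • κ k})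
    (c : Fin I → ℝ) (hc : ∀ i, 0 ≤ c i)
    (kstar : K) (hk : (∑ i, c i * κ kstar i) ≤ 0) :
    (∀ x ∈ T kstar, (∑ i, c i * x i) ≤ ∑ i, c i * η i) ∧
    (∀ k : K, k ≠ kstar → ∀ x' ∈ T k, (∑ i, c i * η i) ≤ ∑ i, c i * x' i) ∧
    (∀ x ∈ T kstar, ∀ k : K, k ≠ kstar → ∀ x' ∈ T k,
      (∑ i, c i * x i) ≤ ∑ i, c i * x' i) := by
  have key : ∀ (k : K) (y : ℝ), 0 ≤ y →
      (∑ i, c i * (η + y • κ k) i) = (∑ i, c i * η i) + y * ∑ i, c i * κ k i := by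
    intro k y hy
    simp only [Pi.add_apply, Pi.smul_apply, smul_eq_mul, mul_add, Finset.sum_add_distrib,
      Finset.mul_sum]
    congr 1
    exact Finset.sum_congr rfl fun i _ => by ring
  have h1 : ∀ x ∈ T kstar, (∑ i, c i * x i) ≤ ∑ i, c i * η i := by
    intro x hx
    rw [hT kstar] at hx
    obtain ⟨y, hy, rfl⟩ := hx
    rw [key kstar y hy]
    nlinarith [mul_nonneg hy (neg_nonneg.2 hk)]
  have h2 : ∀ k : K, k ≠ kstar → ∀ x' ∈ T k, (∑ i, c i * η i) ≤ ∑ i, c i * x' i := by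
    intro k hkk x' hx'
    rw [hT k] at hx'
    obtain ⟨y, hy, rfl⟩ := hx'
    rw [key k y hy]
    -- show 0 ≤ ∑ c i * κ k i
    have hd : 0 ≤ ∑ i, c i * κ k i := by
      obtain ⟨a, b, ha, hb, hab, hcomb⟩ := hpol k kstar hkk
      have ha' : 0 < a := by
        rcases lt_or_eq_of_le ha with h | h
        · exact h
        · exfalso
          rcases lt_or_eq_of_le hb with hb' | hb'
          · obtain ⟨i, hi⟩ := hneg kstar
            subst h
            have := hcomb i
            nlinarith [mul_neg_of_pos_of_neg hb' hi]
          · exact hab ⟨h.symm, hb'.symm⟩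
      have hsum : 0 ≤ ∑ i, c i * (a * κ k i + b * κ kstar i) :=
        Finset.sum_nonneg fun i _ => mul_nonneg (hc i) (hcomb i)
      have : ∑ i, c i * (a * κ k i + b * κ kstar i)
          = a * (∑ i, c i * κ k i) + b * (∑ i, c i * κ kstar i) := by
        simp only [mul_add, Finset.sum_add_distrib, Finset.mul_sum]
        congr 1 <;> exact Finset.sum_congr rfl fun i _ => by ring
      rw [this] at hsum
      nlinarith [mul_nonpos_of_nonneg_of_nonpos hb hk]
    nlinarith
  exact ⟨h1, h2, fun x hx k hkk x' hx' => le_trans (h1 x hx) (h2 k hkk x' hx')⟩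
end

section
/- Let I ≥ 1 and κ', κ'' : Fin I → ℝ each have a strictly negative coordinate (κ' i < 0 for some i, and κ'' i < 0 for some i). The following are equivalent: (1) there exist reals y ≥ 0 and y' ≥ 0, not both zero, with y * κ' i + y' * κ'' i ≥ 0 for every i; (2) for every c : Fin I → ℝ with 0 ≤ c i for all i, both (c·κ'' ≤ 0 → c·κ' ≥ 0) and (c·κ' ≤ 0 → c·κ'' ≥ 0). -/
/-- Lemma 5 (lem:polarized_alt) for a pair of rays: polarization is equivalent
to its dual characterization via nonnegative cost vectors. -/
theorem stmt15 (I : ℕ) (hI : 1 ≤ I) (κ' κ'' : Fin I → ℝ)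
    (h' : ∃ i, κ' i < 0) (h'' : ∃ i, κ'' i < 0) :
    (∃ y y' : ℝ, 0 ≤ y ∧ 0 ≤ y' ∧ ¬(y = 0 ∧ y' = 0) ∧
      ∀ i, 0 ≤ y * κ' i + y' * κ'' i) ↔
    (∀ c : Fin I → ℝ, (∀ i, 0 ≤ c i) →
      ((∑ i, c i * κ'' i) ≤ 0 → 0 ≤ ∑ i, c i * κ' i) ∧
      ((∑ i, c i * κ' i) ≤ 0 → 0 ≤ ∑ i, c i * κ'' i)) := by
  constructor
  · rintro ⟨y, y', hy, hy', hne, hpos⟩ c hc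
    have hsum : 0 ≤ y * (∑ i, c i * κ' i) + y' * (∑ i, c i * κ'' i) := by
      have : 0 ≤ ∑ i, c i * (y * κ' i + y' * κ'' i) :=
        Finset.sum_nonneg fun i _ => mul_nonneg (hc i) (hpos i)
      calc (0:ℝ) ≤ ∑ i, c i * (y * κ' i + y' * κ'' i) := this
        _ = y * (∑ i, c i * κ' i) + y' * (∑ i, c i * κ'' i) := by
          rw [Finset.mul_sum, Finset.mul_sum, ← Finset.sum_add_distrib]
          exact Finset.sum_congr rfl fun i _ => by ring
    have hy0 : y = 0 → 0 < y' := by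
      intro hy0
      rcases lt_or_eq_of_le hy' with h | h
      · exact h
      · exact absurd ⟨hy0, h.symm⟩ hne
    have hy'0 : y' = 0 → 0 < y := by
      intro hy0
      rcases lt_or_eq_of_le hy with h | h
      · exact h
      · exact absurd ⟨h.symm, hy0⟩ hne
    constructor
    · intro hle
      rcases eq_or_lt_of_le hy with hy0 | hy0
      · -- y = 0, then y' > 0 and κ'' i ≥ 0 for all i, contradicting h''
        exfalso
        obtain ⟨i, hi⟩ := h''
        have hy'pos := hy0 ▸ hy0 ▸ hy'0
        have := hpos i
        rw [← hy0, zero_mul, zero_add] at this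
        have hy'pos : 0 < y' := by
          rcases lt_or_eq_of_le hy' with h | h
          · exact h
          · exact absurd ⟨hy0.symm, h.symm⟩ hne
        nlinarith
      · nlinarith
    · intro hle
      rcases eq_or_lt_of_le hy' with hy0 | hy0
      · exfalso
        obtain ⟨i, hi⟩ := h'
        have := hpos i
        rw [← hy0, zero_mul, add_zero] at this
        have hypos : 0 < y := by
          rcases lt_or_eq_of_le hy with h | h
          · exact h
          · exact absurd ⟨h.symm, hy0.symm⟩ hne
        nlinarith
      · nlinarith
  · intro hdual
    by_contra hno
    -- The segment [κ', κ''] is disjoint from the nonnegative orthant.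
    set S : Set (Fin I → ℝ) := segment ℝ κ' κ''
    set T : Set (Fin I → ℝ) := {x | ∀ i, 0 ≤ x i}
    have hdisj : Disjoint S T := by
      rw [Set.disjoint_left]
      rintro x ⟨a, b, ha, hb, hab, rfl⟩ hxT
      exact hno ⟨a, b, ha, hb, by rintro ⟨h1, h2⟩; rw [h1, h2] at hab; simpa using hab,
        fun i => by simpa using hxT i⟩
    have hScv : Convex ℝ S := convex_segment _ _
    have hScp : IsCompact S := by
      show IsCompact (segment ℝ κ' κ'')
      rw [segment_eq_image_lineMap]
      exact (isCompact_Icc).image ((AffineMap.lineMap κ' κ'' : ℝ →ᵃ[ℝ] (Fin I → ℝ)).continuous_of_finiteDimensional)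
    have hTcv : Convex ℝ T := by
      intro x hx y hy a b ha hb hab i
      exact add_nonneg (mul_nonneg ha (hx i)) (mul_nonneg hb (hy i))
    have hTcl : IsClosed T := by
      have : T = ⋂ i, {x : Fin I → ℝ | 0 ≤ x i} := by
        ext x; simp [T, Set.mem_iInter]
      rw [this]
      exact isClosed_iInter fun i => isClosed_le continuous_const (continuous_apply i)
    obtain ⟨f, u, v, hfu, huv, hfv⟩ :=
      geometric_hahn_banach_compact_closed hScv hScp hTcv hTcl hdisj
    set c : Fin I → ℝ := fun i => f (Pi.single i 1)
    have hrep : ∀ x : Fin I → ℝ, f x = ∑ i, c i * x i := by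
      intro x
      have hx : x = ∑ i, x i • (Pi.single i 1 : Fin I → ℝ) := by
        funext j
        simp only [Finset.sum_apply, Pi.smul_apply, Pi.single_apply, smul_eq_mul,
          mul_ite, mul_one, mul_zero]
        simp
      conv_lhs => rw [hx]
      rw [map_sum]
      exact Finset.sum_congr rfl fun i _ => by simp [c, mul_comm]
    have hv0 : v < 0 := by
      have := hfv 0 (fun i => le_refl 0)
      simpa using this
    have hcnn : ∀ i, 0 ≤ c i := by
      intro i
      by_contra hci
      push_neg at hci
      have hmem : (Pi.single i (v / c i) : Fin I → ℝ) ∈ T := by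
        intro j
        rcases eq_or_ne j i with rfl | hj
        · simp [div_nonneg_iff, hv0.le, hci.le]
        · simp [Pi.single_apply, hj]
      have := hfv _ hmem
      rw [hrep] at this
      have hsum : ∑ j, c j * (Pi.single i (v / c i) : Fin I → ℝ) j = v := by
        rw [Finset.sum_eq_single i]
        · rw [Pi.single_eq_same, mul_div_cancel₀ _ (ne_of_lt hci)]
        · intro j _ hj; simp [Pi.single_apply, hj]
        · intro h; exact absurd (Finset.mem_univ i) h
      rw [hsum] at this
      exact lt_irrefl v this
    have hκ' : f κ' < 0 := lt_trans (hfu κ' (left_mem_segment ℝ κ' κ'')) (lt_trans huv hv0)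
    have hκ'' : f κ'' < 0 := lt_trans (hfu κ'' (right_mem_segment ℝ κ' κ'')) (lt_trans huv hv0)
    rw [hrep] at hκ' hκ''
    have := (hdual c hcnn).1 hκ''.le
    linarith
end

section
/- Let I ≥ 1, let K be a finite type, and let κ : K → (Fin I → ℝ) satisfy: for every k, κ k i < 0 for some i; and for every k ≠ k', there exist reals y ≥ 0 and y' ≥ 0, not both zero, with y * κ k i + y' * κ k' i ≥ 0 for every i. Then Fintype.card K ≤ I. -/
/-- Corollary 2: any collection of polarized ray directions in ℝ^I, each with a
strictly negative coordinate, has at most I members. -/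
theorem stmt16 (I : ℕ) (hI : 1 ≤ I) (K : Type*) [Fintype K]
    (κ : K → Fin I → ℝ)
    (hneg : ∀ k, ∃ i, κ k i < 0)
    (hpol : ∀ k k' : K, k ≠ k' → ∃ y y' : ℝ, 0 ≤ y ∧ 0 ≤ y' ∧ ¬(y = 0 ∧ y' = 0) ∧
      ∀ i, 0 ≤ y * κ k i + y' * κ k' i) :
    Fintype.card K ≤ I := by
  choose f hf using hneg
  have hinj : Function.Injective f := by
    intro k k' hkk'
    by_contra hne
    obtain ⟨y, y', hy, hy', hboth, hge⟩ := hpol k k' hne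
    have hypos : 0 < y := by
      rcases hy.lt_or_eq with h | h
      · exact h
      · exfalso
        have hy'pos : 0 < y' := by
          rcases hy'.lt_or_eq with h' | h'
          · exact h'
          · exact absurd ⟨h.symm, h'.symm⟩ hboth
        have := hge (f k')
        subst h
        nlinarith [hf k']
    have hy'pos : 0 < y' := by
      rcases hy'.lt_or_eq with h' | h'
      · exact h'
      · exfalso
        have := hge (f k)
        subst h'
        nlinarith [hf k]
    have h1 := hf k
    have h2 := hf k'
    rw [← hkk'] at h2
    have := hge (f k)
    nlinarith
  calc Fintype.card K ≤ Fintype.card (Fin I) := Fintype.card_le_of_injective f hinj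
    _ = I := Fintype.card_fin I
end

section
/- Let I ≥ 1, let J be a nonempty finite type, and for each j let F j ⊆ (Fin I → ℝ) be a nonempty compact convex set of nonnegative vectors, π j : Fin I → ℝ, and n : Fin I → ℝ. Assume feasibility: there exists η : J → (Fin I → ℝ) with η j ∈ F j for all j and ∑_j η j = n. For w : Fin I → ℝ define S j w = sSup {w·y | y ∈ F j}. Then sInf { ∑_j (π j)·(x j) | x : J → (Fin I → ℝ), (∀ j, x j ∈ F j) ∧ ∑_j x j = n } = ⨆ (λ : Fin I → ℝ), (λ·n − ∑_j S j (λ − π j)). -/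
/-!
Weak duality is the inequality `(l - π j) ⬝ᵥ x j ≤ S j (l - π j)` summed over the agents.
Conversely, let `p` be the primal minimum and `q < p`. The image of `∏ j, F j` under
`x ↦ (∑ j, x j, ∑ j, π j ⬝ᵥ x j)` is compact and convex and misses `(n, q)`, so a hyperplane
separates them; since `(n, p)` lies in the image, the normal has a positive last coordinate, and
normalising it gives a multiplier `l` whose dual value exceeds `q`. The dual objective splits into
the support functions `S j` because the Lagrangian is a sum of functions of the single `x j`.
-/

open Set

theorem sSup_image_univ_pi_sum {J : Type*} [Fintype J] {X : J → Type*}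
    [∀ j, TopologicalSpace (X j)] {F : ∀ j, Set (X j)} (hF : ∀ j, IsCompact (F j))
    (hne : ∀ j, (F j).Nonempty) {f : ∀ j, X j → ℝ} (hf : ∀ j, ContinuousOn (f j) (F j)) :
    sSup ((fun x => ∑ j, f j (x j)) '' univ.pi F) = ∑ j, sSup (f j '' F j) := by
  choose y hy hsup hmax using fun j => (hF j).exists_sSup_image_eq_and_ge (hne j) (hf j)
  refine IsGreatest.csSup_eq ⟨⟨y, fun j _ => hy j, by simp only [hsup]⟩, ?_⟩
  rintro _ ⟨x, hx, rfl⟩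
  simp only [hsup]
  exact Finset.sum_le_sum fun j _ => hmax j (x j) (hx j (mem_univ j))

section LagrangeDuality

variable {ι : Type*} [Fintype ι]

theorem StrongDual.exists_apply_prod_eq_dotProduct_add_mul (f : StrongDual ℝ ((ι → ℝ) × ℝ)) :
    ∃ a : ι → ℝ, ∀ z, f z = a ⬝ᵥ z.1 + z.2 * f (0, 1) := by
  classical
  let g : (ι → ℝ) →ₗ[ℝ] ℝ := (f : _ →ₗ[ℝ] ℝ) ∘ₗ LinearMap.inl ℝ _ ℝ
  refine ⟨(dotProductEquiv ℝ ι).symm g, fun z => ?_⟩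
  have hg : (dotProductEquiv ℝ ι).symm g ⬝ᵥ z.1 = f (z.1, 0) :=
    LinearMap.congr_fun ((dotProductEquiv ℝ ι).apply_symm_apply g) z.1
  have hz : z = (z.1, 0) + z.2 • ((0 : ι → ℝ), (1 : ℝ)) := by ext <;> simp
  conv_lhs => rw [hz, map_add, map_smul, smul_eq_mul]
  rw [hg]

theorem Convex.exists_dotProduct_sub_lt_of_notMem {G : Set ((ι → ℝ) × ℝ)} (hconv : Convex ℝ G)
    (hclosed : IsClosed G) {n : ι → ℝ} {q r : ℝ} (hr : (n, r) ∈ G) (hq : (n, q) ∉ G)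
    (hqr : q < r) : ∃ l : ι → ℝ, ∀ z ∈ G, l ⬝ᵥ z.1 - z.2 < l ⬝ᵥ n - q := by
  obtain ⟨f, u, hfq, hfG⟩ := geometric_hahn_banach_point_closed hconv hclosed hq
  obtain ⟨a, hf⟩ := f.exists_apply_prod_eq_dotProduct_add_mul
  set s := f (0, 1)
  have hsep : ∀ z ∈ G, a ⬝ᵥ n + q * s < a ⬝ᵥ z.1 + z.2 * s := fun z hz => by
    have := hfG z hz
    rw [hf] at this hfq
    exact hfq.trans this
  have hs : 0 < s := by nlinarith [hsep _ hr]
  refine ⟨-s⁻¹ • a, fun z hz => ?_⟩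
  rw [smul_dotProduct, smul_dotProduct, smul_eq_mul, smul_eq_mul]
  field_simp
  linarith [hsep z hz]

variable {E : Type*} [AddCommGroup E] [Module ℝ E] [TopologicalSpace E] {K : Set E}
  (A : E →L[ℝ] ι → ℝ) (c : E →L[ℝ] ℝ) {n : ι → ℝ} {x₀ : E}

theorem exists_lagrangian_lt_of_lt_min (hK : IsCompact K) (hKc : Convex ℝ K)
    (hx₀ : x₀ ∈ K) (hAx₀ : A x₀ = n) (hmin : ∀ x ∈ K, A x = n → c x₀ ≤ c x) {q : ℝ}
    (hq : q < c x₀) : ∃ l : ι → ℝ, ∀ x ∈ K, l ⬝ᵥ A x - c x < l ⬝ᵥ n - q := by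
  let Φ := A.prod c
  have hconv : Convex ℝ (Φ '' K) := by simpa using hKc.linear_image Φ.toLinearMap
  have hx₀Φ : (n, c x₀) ∈ Φ '' K := ⟨x₀, hx₀, by simp [Φ, hAx₀]⟩
  have hqΦ : (n, q) ∉ Φ '' K := by
    rintro ⟨x, hx, hΦx⟩
    obtain ⟨hAx, rfl⟩ := Prod.ext_iff.1 hΦx
    exact (hmin x hx hAx).not_gt hq
  obtain ⟨l, hl⟩ := hconv.exists_dotProduct_sub_lt_of_notMem
    (hK.image Φ.continuous).isClosed hx₀Φ hqΦ hq
  exact ⟨l, fun x hx => hl (Φ x) (mem_image_of_mem Φ hx)⟩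

theorem sInf_image_eq_iSup_sub_sSup_lagrangian (hK : IsCompact K) (hKc : Convex ℝ K)
    (hx₀ : x₀ ∈ K) (hAx₀ : A x₀ = n) :
    sInf (c '' {x ∈ K | A x = n}) =
      ⨆ l : ι → ℝ, l ⬝ᵥ n - sSup ((fun x => l ⬝ᵥ A x - c x) '' K) := by
  have hfeas : IsCompact {x ∈ K | A x = n} :=
    hK.inter_right (isClosed_eq A.continuous continuous_const)
  obtain ⟨x₁, ⟨hx₁K, hAx₁⟩, hx₁, hx₁min⟩ :=
    hfeas.exists_sInf_image_eq_and_le ⟨x₀, hx₀, hAx₀⟩ c.continuous.continuousOn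
  have hL : ∀ l : ι → ℝ, Continuous fun x => l ⬝ᵥ A x - c x := fun l =>
    (continuous_const.dotProduct A.continuous).sub c.continuous
  rw [hx₁, eq_comm]
  refine ciSup_eq_of_forall_le_of_forall_lt_exists_gt (fun l => ?_) fun q hq => ?_
  · have := le_csSup (hK.image (hL l)).bddAbove (mem_image_of_mem _ hx₁K)
    rw [hAx₁] at this
    linarith
  · obtain ⟨l, hl⟩ := exists_lagrangian_lt_of_lt_min A c hK hKc hx₁K hAx₁
      (fun x hx hAx => hx₁min x ⟨hx, hAx⟩) hq
    obtain ⟨y, hyK, hy⟩ := hK.exists_sSup_image_eq ⟨x₀, hx₀⟩ (hL l).continuousOn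
    exact ⟨l, by linarith [hl y hyK]⟩

end LagrangeDuality

theorem stmt17_general (I : ℕ) (J : Type*) [Fintype J]
    (F : J → Set (Fin I → ℝ))
    (hcomp : ∀ j, IsCompact (F j))
    (hconv : ∀ j, Convex ℝ (F j))
    (π : J → Fin I → ℝ) (n : Fin I → ℝ)
    (η : J → Fin I → ℝ) (hη : ∀ j, η j ∈ F j) (hsum : ∑ j, η j = n)
    (S : J → (Fin I → ℝ) → ℝ)
    (hS : ∀ j w, S j w = sSup {t : ℝ | ∃ y ∈ F j, t = ∑ i, w i * y i}) :
    sInf {t : ℝ | ∃ x : J → Fin I → ℝ, (∀ j, x j ∈ F j) ∧ (∑ j, x j = n) ∧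
        t = ∑ j, ∑ i, π j i * x j i} =
    ⨆ l : Fin I → ℝ, ((∑ i, l i * n i) - ∑ j, S j (fun i => l i - π j i)) := by
  let A : (J → Fin I → ℝ) →L[ℝ] Fin I → ℝ := ∑ j, ContinuousLinearMap.proj j
  let c : (J → Fin I → ℝ) →L[ℝ] ℝ :=
    LinearMap.toContinuousLinearMap (∑ j, dotProductBilin ℝ ℝ (π j) ∘ₗ LinearMap.proj j)
  have hA : ∀ x, A x = ∑ j, x j := by simp [A]
  have hc : ∀ x, c x = ∑ j, π j ⬝ᵥ x j := by simp [c]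
  have hprimal : {t : ℝ | ∃ x : J → Fin I → ℝ, (∀ j, x j ∈ F j) ∧ (∑ j, x j = n) ∧
      t = ∑ j, ∑ i, π j i * x j i} = c '' {x ∈ univ.pi F | A x = n} := by
    ext t
    simp [hA, hc, dotProduct, eq_comm, and_assoc]
  have hSj : ∀ j w, S j w = sSup ((w ⬝ᵥ ·) '' F j) := fun j w => by
    rw [hS]
    congr 1
    ext
    simp [dotProduct, eq_comm]
  have hdual : ∀ l : Fin I → ℝ, ∑ j, S j (fun i => l i - π j i) =
      sSup ((fun x => l ⬝ᵥ A x - c x) '' univ.pi F) := fun l => by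
    simp only [hSj]
    rw [← sSup_image_univ_pi_sum (f := fun j y => (fun i => l i - π j i) ⬝ᵥ y) hcomp
      (fun j => ⟨η j, hη j⟩) fun j => (continuous_const.dotProduct continuous_id).continuousOn]
    refine congrArg sSup (image_congr fun x _ => ?_)
    rw [hA, hc, dotProduct_sum, ← Finset.sum_sub_distrib]
    exact Finset.sum_congr rfl fun j _ => sub_dotProduct l (π j) (x j)
  rw [hprimal, sInf_image_eq_iSup_sub_sSup_lagrangian A c (isCompact_univ_pi hcomp)
    (convex_pi fun j _ => hconv j) (fun j _ => hη j) (by rw [hA, hsum])]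
  simp only [hdual]
  rfl

/-- Proposition 2 (strong duality part): the value of the outer program equals
the value of its dual, formulated via the support functions of the
OSP-feasible sets. -/
theorem stmt17 (I : ℕ) (hI : 1 ≤ I) (J : Type*) [Fintype J] [Nonempty J]
    (F : J → Set (Fin I → ℝ))
    (hne : ∀ j, (F j).Nonempty) (hcomp : ∀ j, IsCompact (F j))
    (hconv : ∀ j, Convex ℝ (F j))
    (hnn : ∀ j, ∀ x ∈ F j, ∀ i, 0 ≤ x i)
    (π : J → Fin I → ℝ) (n : Fin I → ℝ)
    (η : J → Fin I → ℝ) (hη : ∀ j, η j ∈ F j) (hsum : ∑ j, η j = n)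
    (S : J → (Fin I → ℝ) → ℝ)
    (hS : ∀ j w, S j w = sSup {t : ℝ | ∃ y ∈ F j, t = ∑ i, w i * y i}) :
    sInf {t : ℝ | ∃ x : J → Fin I → ℝ, (∀ j, x j ∈ F j) ∧ (∑ j, x j = n) ∧
        t = ∑ j, ∑ i, π j i * x j i} =
    ⨆ l : Fin I → ℝ, ((∑ i, l i * n i) - ∑ j, S j (fun i => l i - π j i)) :=
  stmt17_general I J F hcomp hconv π n η hη hsum S hS
end

section
/- Let I ≥ 1, let J be a nonempty finite type, and for each j let F j ⊆ (Fin I → ℝ) be a nonempty compact convex set of nonnegative vectors, π j : Fin I → ℝ, and n : Fin I → ℝ. Assume there exists η : J → (Fin I → ℝ) with η j ∈ F j for all j and ∑_j η j = n. For w define S j w = sSup {w·y | y ∈ F j}, and suppose λ* : Fin I → ℝ attains the supremum of λ ↦ λ·n − ∑_j S j (λ − π j). Then there exists x : J → (Fin I → ℝ) such that: for every j, x j ∈ F j and (λ* − π j)·(x j) = S j (λ* − π j) (i.e. x j maximizes (λ* − π j)·y over F j); ∑_j x j = n; and ∑_j (π j)·(x j) = sInf { ∑_j (π j)·(y j) |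 y : J → (Fin I → ℝ), (∀ j, y j ∈ F j) ∧ ∑_j y j = n }. -/
noncomputable def dotP (I : ℕ) (v y : Fin I → ℝ) : ℝ := ∑ i, v i * y i

lemma dotP_cont (I : ℕ) (v : Fin I → ℝ) : Continuous (dotP I v) := by
  unfold dotP
  exact continuous_finset_sum _ fun i _ => (continuous_const.mul (continuous_apply i))

lemma exists_max (I : ℕ) (K : Set (Fin I → ℝ)) (hK : IsCompact K) (hne : K.Nonempty)
    (v : Fin I → ℝ) : ∃ m ∈ K, ∀ y ∈ K, dotP I v y ≤ dotP I v m := by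
  obtain ⟨m, hm, h⟩ := hK.exists_isMaxOn hne (dotP_cont I v).continuousOn
  exact ⟨m, hm, fun y hy => h hy⟩

lemma img_eq (I : ℕ) (K : Set (Fin I → ℝ)) (v : Fin I → ℝ) :
    {t : ℝ | ∃ y ∈ K, t = ∑ i, v i * y i} = dotP I v '' K := by
  ext t; constructor
  · rintro ⟨y, hy, rfl⟩; exact ⟨y, hy, rfl⟩
  · rintro ⟨y, hy, rfl⟩; exact ⟨y, hy, rfl⟩

lemma sSup_eq_max (I : ℕ) (K : Set (Fin I → ℝ)) (v m : Fin I → ℝ) (hm : m ∈ K)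
    (hmax : ∀ y ∈ K, dotP I v y ≤ dotP I v m) :
    sSup {t : ℝ | ∃ y ∈ K, t = ∑ i, v i * y i} = dotP I v m := by
  rw [img_eq]
  exact IsGreatest.csSup_eq ⟨⟨m, hm, rfl⟩, fun t ⟨y, hy, h⟩ => h ▸ hmax y hy⟩

lemma le_S (I : ℕ) (K : Set (Fin I → ℝ)) (hK : IsCompact K) (hne : K.Nonempty)
    (v y : Fin I → ℝ) (hy : y ∈ K) :
    dotP I v y ≤ sSup {t : ℝ | ∃ y ∈ K, t = ∑ i, v i * y i} := by
  obtain ⟨m, hm, hmax⟩ := exists_max I K hK hne v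
  rw [sSup_eq_max I K v m hm hmax]; exact hmax y hy

lemma sep (I : ℕ) (G : Set (Fin I → ℝ)) (hG : Convex ℝ G) (hcl : IsClosed G)
    (n : Fin I → ℝ) (hn : n ∉ G) :
    ∃ d : Fin I → ℝ, ∃ u : ℝ, (∀ a ∈ G, dotP I d a < u) ∧ u < dotP I d n := by
  obtain ⟨f, u, hfa, hfn⟩ := geometric_hahn_banach_closed_point hG hcl hn
  set d : Fin I → ℝ := fun i => f (fun j => if i = j then 1 else 0) with hd
  have hrep : ∀ x : Fin I → ℝ, f x = dotP I d x := by
    intro x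
    conv_lhs => rw [pi_eq_sum_univ x]
    rw [map_sum]
    unfold dotP
    refine Finset.sum_congr rfl fun i _ => ?_
    rw [map_smul]
    simp [hd, smul_eq_mul, mul_comm]
  exact ⟨d, u, fun a ha => hrep a ▸ hfa a ha, hrep n ▸ hfn⟩

lemma dotP_linear (I : ℕ) (v : Fin I → ℝ) : IsLinearMap ℝ (dotP I v) := by
  constructor
  · intro x y; unfold dotP; simp [mul_add, Finset.sum_add_distrib]
  · intro c x; unfold dotP; simp [Finset.mul_sum, mul_comm, mul_assoc, mul_left_comm]

lemma dotP_add_left (I : ℕ) (v w y : Fin I → ℝ) :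
    dotP I (v + w) y = dotP I v y + dotP I w y := by
  unfold dotP; simp [add_mul, Finset.sum_add_distrib]

lemma dotP_smul_left (I : ℕ) (c : ℝ) (v y : Fin I → ℝ) :
    dotP I (c • v) y = c * dotP I v y := by
  unfold dotP; simp [Finset.mul_sum, mul_assoc]

lemma dotP_sum_right (I : ℕ) {J : Type*} [Fintype J] (v : Fin I → ℝ) (x : J → Fin I → ℝ) :
    dotP I v (∑ j, x j) = ∑ j, dotP I v (x j) := by
  unfold dotP
  rw [Finset.sum_comm]
  refine Finset.sum_congr rfl fun i _ => ?_
  simp [Finset.mul_sum]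

lemma key (I : ℕ) (J : Type*) [Fintype J] [Nonempty J]
    (F : J → Set (Fin I → ℝ)) (hne : ∀ j, (F j).Nonempty)
    (hcomp : ∀ j, IsCompact (F j)) (hconv : ∀ j, Convex ℝ (F j))
    (w : J → Fin I → ℝ) (n : Fin I → ℝ)
    (Sm : J → (Fin I → ℝ) → ℝ)
    (hSm : ∀ j v, Sm j v = sSup {t : ℝ | ∃ y ∈ F j, t = ∑ i, v i * y i})
    (hdual : ∀ v : Fin I → ℝ, dotP I v n ≤ ∑ j, (Sm j (w j + v) - Sm j (w j))) :
    ∃ x : J → Fin I → ℝ, (∀ j, x j ∈ F j ∧ dotP I (w j) (x j) = Sm j (w j)) ∧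
      ∑ j, x j = n := by
  have hmaxS : ∀ j v, ∃ m ∈ F j, (∀ y ∈ F j, dotP I v y ≤ dotP I v m) ∧
      Sm j v = dotP I v m := by
    intro j v
    obtain ⟨m, hm, hmax⟩ := exists_max I (F j) (hcomp j) (hne j) v
    exact ⟨m, hm, hmax, by rw [hSm]; exact sSup_eq_max I (F j) v m hm hmax⟩
  have hleS : ∀ j v y, y ∈ F j → dotP I v y ≤ Sm j v := by
    intro j v y hy; rw [hSm]; exact le_S I (F j) (hcomp j) (hne j) v y hy
  set M : J → Set (Fin I → ℝ) := fun j => {y ∈ F j | Sm j (w j) ≤ dotP I (w j) y}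
    with hM
  have hMne : ∀ j, (M j).Nonempty := by
    intro j; obtain ⟨m, hm, hmax, hSe⟩ := hmaxS j (w j)
    exact ⟨m, hm, hSe.le⟩
  have hMcomp : ∀ j, IsCompact (M j) := by
    intro j
    have he : M j = F j ∩ (dotP I (w j)) ⁻¹' Set.Ici (Sm j (w j)) := rfl
    rw [he]
    exact (hcomp j).inter_right (isClosed_Ici.preimage (dotP_cont I (w j)))
  have hMconv : ∀ j, Convex ℝ (M j) := by
    intro j
    exact (hconv j).inter (convex_halfSpace_ge (dotP_linear I (w j)) _)
  set G : Set (Fin I → ℝ) := (fun x : J → Fin I → ℝ => ∑ j, x j) '' Set.univ.pi M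
    with hG
  have hGcomp : IsCompact G :=
    (isCompact_univ_pi hMcomp).image (continuous_finset_sum _ fun j _ => continuous_apply j)
  have hGconv : Convex ℝ G := by
    rintro z₁ ⟨x₁, hx₁, rfl⟩ z₂ ⟨x₂, hx₂, rfl⟩ a b ha hb hab
    refine ⟨fun j => a • x₁ j + b • x₂ j,
      fun j _ => hMconv j (hx₁ j trivial) (hx₂ j trivial) ha hb hab, ?_⟩
    simp [Finset.smul_sum, Finset.sum_add_distrib]
  have hnG : n ∈ G := by
    by_contra hnG
    obtain ⟨d, u, hdu, hun⟩ := sep I G hGconv hGcomp.isClosed n hnG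
    set t : ℕ → ℝ := fun k => 1 / ((k : ℝ) + 1) with ht
    have htpos : ∀ k, 0 < t k := fun k => by positivity
    have H : ∀ k : ℕ, ∀ j, ∃ m ∈ F j,
        (∀ y ∈ F j, dotP I (w j + t k • d) y ≤ dotP I (w j + t k • d) m) ∧
        Sm j (w j + t k • d) = dotP I (w j + t k • d) m := fun k j => hmaxS j _
    choose yk hykF hykmax hykS using H
    have Hm : ∀ j, ∃ m ∈ F j, (∀ y ∈ F j, dotP I (w j) y ≤ dotP I (w j) m) ∧
        Sm j (w j) = dotP I (w j) m := fun j => hmaxS j (w j)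
    choose m0 hm0F hm0max hm0S using Hm
    -- (A): d·n ≤ ∑ d·(yk k j)
    have hA : ∀ k, dotP I d n ≤ ∑ j, dotP I d (yk k j) := by
      intro k
      have h1 := hdual (t k • d)
      rw [dotP_smul_left] at h1
      have h2 : ∑ j, (Sm j (w j + t k • d) - Sm j (w j)) ≤
          ∑ j, t k * dotP I d (yk k j) := by
        refine Finset.sum_le_sum fun j _ => ?_
        have h3 := hleS j (w j) (yk k j) (hykF k j)
        have h4 := hykS k j
        rw [dotP_add_left, dotP_smul_left] at h4
        linarith
      rw [← Finset.mul_sum] at h2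
      exact le_of_mul_le_mul_left (h1.trans h2) (htpos k)
    -- (B): lower bound on dot w yk
    have hB : ∀ k j, Sm j (w j) + t k * (dotP I d (m0 j) - dotP I d (yk k j)) ≤
        dotP I (w j) (yk k j) := by
      intro k j
      have h4 := hykS k j
      rw [dotP_add_left, dotP_smul_left] at h4
      have h5 := hykmax k j (m0 j) (hm0F j)
      simp only [dotP_add_left, dotP_smul_left] at h5
      have h6 := hm0S j
      linarith
    -- subsequence
    obtain ⟨ys, hys, φ, hφ, htend⟩ := (isCompact_univ_pi hcomp).tendsto_subseq
      (x := yk) (fun k j _ => hykF k j)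
    have htj : ∀ j, Filter.Tendsto (fun k => yk (φ k) j) Filter.atTop (nhds (ys j)) :=
      fun j => ((continuous_apply j).tendsto ys).comp htend
    have hdotlim : ∀ v j, Filter.Tendsto (fun k => dotP I v (yk (φ k) j))
        Filter.atTop (nhds (dotP I v (ys j))) :=
      fun v j => ((dotP_cont I v).tendsto _).comp (htj j)
    have htt : Filter.Tendsto (fun k => t (φ k)) Filter.atTop (nhds 0) :=
      tendsto_one_div_add_atTop_nhds_zero_nat.comp hφ.tendsto_atTop
    have hysM : ∀ j, ys j ∈ M j := by
      intro j
      refine ⟨hys j trivial, ?_⟩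
      have hlim : Filter.Tendsto (fun k => Sm j (w j) +
          t (φ k) * (dotP I d (m0 j) - dotP I d (yk (φ k) j))) Filter.atTop
          (nhds (Sm j (w j) + 0 * (dotP I d (m0 j) - dotP I d (ys j)))) :=
        tendsto_const_nhds.add (htt.mul (tendsto_const_nhds.sub (hdotlim d j)))
      have := le_of_tendsto_of_tendsto hlim (hdotlim (w j) j)
        (Filter.Eventually.of_forall fun k => hB (φ k) j)
      simpa using this
    have hsum : Filter.Tendsto (fun k => ∑ j, dotP I d (yk (φ k) j)) Filter.atTop
        (nhds (∑ j, dotP I d (ys j))) :=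
      tendsto_finset_sum _ fun j _ => hdotlim d j
    have hfin : dotP I d n ≤ ∑ j, dotP I d (ys j) :=
      le_of_tendsto_of_tendsto tendsto_const_nhds hsum
        (Filter.Eventually.of_forall fun k => hA (φ k))
    have hmem : (∑ j, ys j) ∈ G := ⟨ys, fun j _ => hysM j, rfl⟩
    have := hdu _ hmem
    rw [dotP_sum_right] at this
    linarith
  obtain ⟨x, hx, hxsum⟩ := hnG
  exact ⟨x, fun j => ⟨(hx j trivial).1,
    le_antisymm (hleS j (w j) (x j) (hx j trivial).1) (hx j trivial).2⟩, hxsum⟩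

/-- Proposition 2 (attainment/selection part): from an optimal dual multiplier
λ*, optimal primal selections can be read off agentwise. -/
theorem stmt18 (I : ℕ) (hI : 1 ≤ I) (J : Type*) [Fintype J] [Nonempty J]
    (F : J → Set (Fin I → ℝ))
    (hne : ∀ j, (F j).Nonempty) (hcomp : ∀ j, IsCompact (F j))
    (hconv : ∀ j, Convex ℝ (F j))
    (hnn : ∀ j, ∀ x ∈ F j, ∀ i, 0 ≤ x i)
    (π : J → Fin I → ℝ) (n : Fin I → ℝ)
    (η : J → Fin I → ℝ) (hη : ∀ j, η j ∈ F j) (hsum : ∑ j, η j = n)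
    (S : J → (Fin I → ℝ) → ℝ)
    (hS : ∀ j w, S j w = sSup {t : ℝ | ∃ y ∈ F j, t = ∑ i, w i * y i})
    (lstar : Fin I → ℝ)
    (hstar : ∀ l : Fin I → ℝ,
      (∑ i, l i * n i) - (∑ j, S j (fun i => l i - π j i)) ≤
      (∑ i, lstar i * n i) - ∑ j, S j (fun i => lstar i - π j i)) :
    ∃ x : J → Fin I → ℝ,
      (∀ j, x j ∈ F j ∧
        (∑ i, (lstar i - π j i) * x j i) = S j (fun i => lstar i - π j i)) ∧
      (∑ j, x j = n) ∧
      (∑ j, ∑ i, π j i * x j i) =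
        sInf {t : ℝ | ∃ y : J → Fin I → ℝ, (∀ j, y j ∈ F j) ∧ (∑ j, y j = n) ∧
          t = ∑ j, ∑ i, π j i * y j i} := by
  classical
  set w : J → Fin I → ℝ := fun j i => lstar i - π j i with hw
  have hdual : ∀ v : Fin I → ℝ, dotP I v n ≤ ∑ j, (S j (w j + v) - S j (w j)) := by
    intro v
    have h := hstar (fun i => lstar i + v i)
    have he : ∀ j, (fun i => (lstar i + v i) - π j i) = w j + v := by
      intro j; funext i; simp [hw]; ring
    have h3 : ∀ j : J, (S j fun i => lstar i - π j i) = S j (w j) := fun j => rfl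
    simp only [he, h3] at h
    have h2 : ∑ i, (lstar i + v i) * n i = (∑ i, lstar i * n i) + dotP I v n := by
      unfold dotP; rw [← Finset.sum_add_distrib]
      exact Finset.sum_congr rfl fun i _ => by ring
    rw [h2] at h
    rw [Finset.sum_sub_distrib]
    linarith
  obtain ⟨x, hx, hxs⟩ := key I J F hne hcomp hconv w n S (fun j v => hS j v) hdual
  have hxdot : ∀ j, dotP I (w j) (x j) = S j (w j) := fun j => (hx j).2
  have hleS : ∀ j v y, y ∈ F j → dotP I v y ≤ S j v := by
    intro j v y hy; rw [hS]; exact le_S I (F j) (hcomp j) (hne j) v y hy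
  have hid : ∀ (j : J) (z : Fin I → ℝ),
      ∑ i, π j i * z i = dotP I lstar z - dotP I (w j) z := by
    intro j z; unfold dotP
    rw [← Finset.sum_sub_distrib]
    exact Finset.sum_congr rfl fun i _ => by simp [hw]; ring
  refine ⟨x, fun j => ⟨(hx j).1, hxdot j⟩, hxs, ?_⟩
  symm
  apply IsLeast.csInf_eq
  constructor
  · exact ⟨x, fun j => (hx j).1, hxs, rfl⟩
  · rintro t ⟨y, hyF, hys, rfl⟩
    have hkey : ∀ j, dotP I (w j) (y j) ≤ dotP I (w j) (x j) := by
      intro j; rw [hxdot j]; exact hleS j (w j) (y j) (hyF j)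
    have hl : ∑ j, dotP I lstar (y j) = ∑ j, dotP I lstar (x j) := by
      rw [← dotP_sum_right, ← dotP_sum_right, hys, hxs]
    calc ∑ j, ∑ i, π j i * x j i
        = ∑ j, (dotP I lstar (x j) - dotP I (w j) (x j)) :=
          Finset.sum_congr rfl fun j _ => hid j (x j)
      _ ≤ ∑ j, (dotP I lstar (y j) - dotP I (w j) (y j)) := by
          rw [Finset.sum_sub_distrib, Finset.sum_sub_distrib, hl]
          exact sub_le_sub_left (Finset.sum_le_sum fun j _ => hkey j) _
      _ = ∑ j, ∑ i, π j i * y j i :=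
          (Finset.sum_congr rfl fun j _ => (hid j (y j)).symm)
end

section
/- Let I ≥ 1 and let J, K be nonempty finite types. Let η : J → (Fin I → ℝ), κ : J → K → (Fin I → ℝ), π : J → (Fin I → ℝ), and set n = ∑_j η j. For ρ : J → K → ℝ with ρ j k ≥ 0 for all j, k and ∑_k ρ j k = 1 for all j, define V ρ = sInf { ∑_j ∑_k ρ j k * ((π j)·(η j + (α j k) • κ j k)) | α : J → K → ℝ, (∀ j k, 0 ≤ α j k ∧ α j k ≤ 1) ∧ ∑_j ∑_k (ρ j k) • (η j + (α j k) • κ j k) = n }. Let ρ* satisfy ρ* j k > 0 for all j, k and ∑_k ρ* j k = 1 for all j. Then for every ε > 0 there exists δ > 0 such that every ρ with ρ j k ≥ 0, ∑_k ρ j k = 1 for all j, and |ρ j k − ρ* j k| < δ for all j, k satisfies V ρ ≤ V ρ* + ε. -/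
/-- Key analytic step in the proof of Proposition 3: the value function of the
large-market linear program is upper semicontinuous at strictly positive
choice frequencies. -/
theorem stmt19 (I : ℕ) (hI : 1 ≤ I) (J K : Type*)
    [Fintype J] [Nonempty J] [Fintype K] [Nonempty K]
    (η : J → Fin I → ℝ) (κ : J → K → Fin I → ℝ) (π : J → Fin I → ℝ)
    (n : Fin I → ℝ) (hn : n = ∑ j, η j)
    (V : (J → K → ℝ) → ℝ)
    (hV : ∀ ρ : J → K → ℝ, V ρ = sInf {t : ℝ | ∃ α : J → K → ℝ,
      (∀ j k, 0 ≤ α j k ∧ α j k ≤ 1) ∧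
      (∑ j, ∑ k, (ρ j k) • (η j + (α j k) • κ j k) = n) ∧
      t = ∑ j, ∑ k, ρ j k * (∑ i, π j i * (η j i + α j k * κ j k i))})
    (ρstar : J → K → ℝ)
    (hρstar_pos : ∀ j k, 0 < ρstar j k)
    (hρstar_sum : ∀ j, ∑ k, ρstar j k = 1) :
    ∀ ε > 0, ∃ δ > 0, ∀ ρ : J → K → ℝ,
      (∀ j k, 0 ≤ ρ j k) → (∀ j, ∑ k, ρ j k = 1) →
      (∀ j k, |ρ j k - ρstar j k| < δ) →
      V ρ ≤ V ρstar + ε := by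
  classical
  intro ε hε
  set A : J → ℝ := fun j => ∑ i, π j i * η j i with hA
  set Bc : J → K → ℝ := fun j k => ∑ i, π j i * κ j k i with hBc
  -- inner product identity
  have hinner : ∀ (α : J → K → ℝ) (j : J) (k : K),
      (∑ i, π j i * (η j i + α j k * κ j k i)) = A j + α j k * Bc j k := by
    intro α j k
    simp only [hA, hBc, Finset.mul_sum, mul_add]
    rw [Finset.sum_add_distrib]
    congr 1
    exact Finset.sum_congr rfl fun i _ => by ring
  -- objective identity
  have hobj : ∀ (ρ α : J → K → ℝ), (∀ j, ∑ k, ρ j k = 1) →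
      ∑ j, ∑ k, ρ j k * (∑ i, π j i * (η j i + α j k * κ j k i))
        = (∑ j, A j) + ∑ j, ∑ k, (ρ j k * α j k) * Bc j k := by
    intro ρ α hsum
    have hrow : ∀ j : J, ∑ k, ρ j k * (A j + α j k * Bc j k)
        = A j + ∑ k, (ρ j k * α j k) * Bc j k := by
      intro j
      simp only [mul_add]
      rw [Finset.sum_add_distrib, ← Finset.sum_mul, hsum j, one_mul]
      congr 1
      exact Finset.sum_congr rfl fun k _ => by ring
    simp only [hinner, hrow, Finset.sum_add_distrib]
  -- constraint identity
  have hcon : ∀ (ρ α : J → K → ℝ), (∀ j, ∑ k, ρ j k = 1) →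
      ∑ j, ∑ k, ρ j k • (η j + α j k • κ j k)
        = n + ∑ j, ∑ k, (ρ j k * α j k) • κ j k := by
    intro ρ α hsum
    have h1 : ∀ (j : J) (k : K), ρ j k • (η j + α j k • κ j k)
        = ρ j k • η j + (ρ j k * α j k) • κ j k := by
      intro j k; rw [smul_add, smul_smul]
    simp only [h1, Finset.sum_add_distrib]
    congr 1
    rw [hn]
    refine Finset.sum_congr rfl fun j _ => ?_
    rw [← Finset.sum_smul, hsum j, one_smul]
  -- every admissible ρ has entries ≤ 1
  have hle1 : ∀ (ρ : J → K → ℝ), (∀ j k, 0 ≤ ρ j k) → (∀ j, ∑ k, ρ j k = 1) →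
      ∀ j k, ρ j k ≤ 1 := by
    intro ρ h0 h1 j k
    have := Finset.single_le_sum (f := fun k => ρ j k) (fun k' _ => h0 j k')
      (Finset.mem_univ k)
    rw [h1 j] at this
    exact this
  -- boundedness below of the feasible-value set
  have hbdd : ∀ (ρ : J → K → ℝ), (∀ j k, 0 ≤ ρ j k) → (∀ j, ∑ k, ρ j k = 1) →
      BddBelow {t : ℝ | ∃ α : J → K → ℝ,
        (∀ j k, 0 ≤ α j k ∧ α j k ≤ 1) ∧
        (∑ j, ∑ k, (ρ j k) • (η j + (α j k) • κ j k) = n) ∧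
        t = ∑ j, ∑ k, ρ j k * (∑ i, π j i * (η j i + α j k * κ j k i))} := by
    intro ρ h0 h1
    refine ⟨(∑ j, A j) - ∑ j, ∑ k, |Bc j k|, ?_⟩
    rintro t ⟨α, hα, hconα, rfl⟩
    rw [hobj ρ α h1]
    have key : -(∑ j, ∑ k, |Bc j k|) ≤ ∑ j, ∑ k, (ρ j k * α j k) * Bc j k := by
      have : ∀ (j : J) (k : K), -|Bc j k| ≤ (ρ j k * α j k) * Bc j k := by
        intro j k
        have habs : |(ρ j k * α j k) * Bc j k| ≤ |Bc j k| := by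
          rw [abs_mul]
          have h01 : |ρ j k * α j k| ≤ 1 := by
            rw [abs_of_nonneg (mul_nonneg (h0 j k) (hα j k).1)]
            exact mul_le_one₀ (hle1 ρ h0 h1 j k) (hα j k).1 (hα j k).2
          nlinarith [abs_nonneg (Bc j k), abs_nonneg (ρ j k * α j k)]
        linarith [neg_abs_le ((ρ j k * α j k) * Bc j k)]
      calc -(∑ j, ∑ k, |Bc j k|) = ∑ j, ∑ k, -|Bc j k| := by
            simp [Finset.sum_neg_distrib]
        _ ≤ _ := Finset.sum_le_sum fun j _ => Finset.sum_le_sum fun k _ => this j k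
    linarith
  -- constants
  set M : ℝ := ∑ j, ∑ k, |Bc j k| with hM
  have hM0 : 0 ≤ M :=
    Finset.sum_nonneg fun j _ => Finset.sum_nonneg fun k _ => abs_nonneg _
  set θ : ℝ := min (1/2) (ε / (2 * (M + 1))) with hθ
  have hθpos : 0 < θ := lt_min (by norm_num) (by positivity)
  have hθhalf : θ ≤ 1/2 := min_le_left _ _
  have hθM : θ * M ≤ ε / 2 := by
    have h1 : θ ≤ ε / (2 * (M + 1)) := min_le_right _ _
    have h2 : θ * M ≤ θ * (M + 1) := by nlinarith
    have h3 : θ * (M + 1) ≤ (ε / (2 * (M + 1))) * (M + 1) := by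
      apply mul_le_mul_of_nonneg_right h1; linarith
    have h4 : (ε / (2 * (M + 1))) * (M + 1) = ε / 2 := by
      field_simp
    linarith
  -- minimal value of ρstar
  obtain ⟨m, hm_pos, hm_le⟩ : ∃ m : ℝ, 0 < m ∧ ∀ j k, m ≤ ρstar j k := by
    refine ⟨(Finset.univ : Finset (J × K)).inf' (by simp) fun p => ρstar p.1 p.2, ?_, ?_⟩
    · rw [Finset.lt_inf'_iff]
      exact fun p _ => hρstar_pos p.1 p.2
    · intro j k
      exact Finset.inf'_le _ (Finset.mem_univ (j, k))
  refine ⟨θ * m, mul_pos hθpos hm_pos, ?_⟩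
  -- pick a near-optimal α* for ρstar
  have hne : ({t : ℝ | ∃ α : J → K → ℝ,
      (∀ j k, 0 ≤ α j k ∧ α j k ≤ 1) ∧
      (∑ j, ∑ k, (ρstar j k) • (η j + (α j k) • κ j k) = n) ∧
      t = ∑ j, ∑ k, ρstar j k * (∑ i, π j i * (η j i + α j k * κ j k i))}).Nonempty := by
    refine ⟨_, fun _ _ => 0, fun j k => ⟨le_refl 0, by norm_num⟩, ?_, rfl⟩
    rw [hcon ρstar (fun _ _ => 0) hρstar_sum]
    simp
  obtain ⟨ts, hts_mem, hts_lt⟩ := Real.lt_sInf_add_pos hne (half_pos hε)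
  obtain ⟨αs, hαs01, hαscon, hts_eq⟩ := hts_mem
  -- the polarized flows of α* sum to zero
  have hX : ∑ j, ∑ k, (ρstar j k * αs j k) • κ j k = 0 := by
    have h := hcon ρstar αs hρstar_sum
    rw [hαscon] at h
    have := h.symm
    rwa [add_eq_left] at this
  set B : ℝ := ∑ j, ∑ k, (ρstar j k * αs j k) * Bc j k with hB
  have hts_val : ts = (∑ j, A j) + B := by rw [hts_eq, hobj ρstar αs hρstar_sum]
  have hBabs : |B| ≤ M := by
    rw [hB, hM]
    calc |∑ j, ∑ k, (ρstar j k * αs j k) * Bc j k|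
        ≤ ∑ j, |∑ k, (ρstar j k * αs j k) * Bc j k| := Finset.abs_sum_le_sum_abs _ _
      _ ≤ ∑ j, ∑ k, |(ρstar j k * αs j k) * Bc j k| :=
          Finset.sum_le_sum fun j _ => Finset.abs_sum_le_sum_abs _ _
      _ ≤ ∑ j, ∑ k, |Bc j k| := by
          refine Finset.sum_le_sum fun j _ => Finset.sum_le_sum fun k _ => ?_
          rw [abs_mul]
          have h01 : |ρstar j k * αs j k| ≤ 1 := by
            rw [abs_of_nonneg (mul_nonneg (hρstar_pos j k).le (hαs01 j k).1)]
            exact mul_le_one₀ (hle1 ρstar (fun j k => (hρstar_pos j k).le) hρstar_sum j k)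
              (hαs01 j k).1 (hαs01 j k).2
          nlinarith [abs_nonneg (Bc j k), abs_nonneg (ρstar j k * αs j k)]
  -- main argument
  intro ρ hρ0 hρ1 hρδ
  have hρlb : ∀ j k, (1 - θ) * ρstar j k < ρ j k := by
    intro j k
    have h1 := abs_lt.mp (hρδ j k)
    have h2 : θ * m ≤ θ * ρstar j k :=
      mul_le_mul_of_nonneg_left (hm_le j k) hθpos.le
    linarith [h1.1]
  have hρpos : ∀ j k, 0 < ρ j k := by
    intro j k
    have := hρlb j k
    nlinarith [hρstar_pos j k, hθhalf]
  -- the rescaled policy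
  set α : J → K → ℝ := fun j k => (1 - θ) * αs j k * ρstar j k / ρ j k with hα
  have hθ1 : (0:ℝ) < 1 - θ := by linarith
  have hα01 : ∀ j k, 0 ≤ α j k ∧ α j k ≤ 1 := by
    intro j k
    constructor
    · apply div_nonneg _ (hρpos j k).le
      exact mul_nonneg (mul_nonneg hθ1.le (hαs01 j k).1) (hρstar_pos j k).le
    · rw [div_le_one (hρpos j k)]
      have h1 : (1 - θ) * αs j k * ρstar j k ≤ (1 - θ) * ρstar j k := by
        have := mul_le_mul_of_nonneg_right
          (mul_le_mul_of_nonneg_left (hαs01 j k).2 hθ1.le) (hρstar_pos j k).le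
        simpa using this
      linarith [hρlb j k]
  have hprod : ∀ j k, ρ j k * α j k = (1 - θ) * (ρstar j k * αs j k) := by
    intro j k
    have hne : ρ j k ≠ 0 := (hρpos j k).ne'
    rw [hα]
    field_simp
  have hαcon : ∑ j, ∑ k, (ρ j k) • (η j + (α j k) • κ j k) = n := by
    rw [hcon ρ α hρ1]
    have : ∑ j, ∑ k, (ρ j k * α j k) • κ j k
        = (1 - θ) • ∑ j, ∑ k, (ρstar j k * αs j k) • κ j k := by
      simp only [hprod, ← smul_smul, Finset.smul_sum]
    rw [this, hX, smul_zero, add_zero]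
  -- value of the candidate
  have hval : (∑ j, ∑ k, ρ j k * (∑ i, π j i * (η j i + α j k * κ j k i)))
      = (∑ j, A j) + (1 - θ) * B := by
    rw [hobj ρ α hρ1, hB]
    congr 1
    rw [Finset.mul_sum]
    refine Finset.sum_congr rfl fun j _ => ?_
    rw [Finset.mul_sum]
    refine Finset.sum_congr rfl fun k _ => ?_
    rw [hprod, mul_assoc]
  have hVρ : V ρ ≤ (∑ j, A j) + (1 - θ) * B := by
    rw [hV ρ]
    refine csInf_le (hbdd ρ hρ0 hρ1) ⟨α, hα01, hαcon, hval.symm⟩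
  have hfin : (∑ j, A j) + (1 - θ) * B ≤ ts + θ * M := by
    have h1 : -(θ * B) ≤ θ * |B| := by
      rw [← mul_neg]
      exact mul_le_mul_of_nonneg_left (neg_le_abs B) hθpos.le
    have h2 : θ * |B| ≤ θ * M := mul_le_mul_of_nonneg_left hBabs hθpos.le
    rw [hts_val]
    nlinarith
  rw [← hV ρstar] at hts_lt
  linarith
end
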